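/- Let n ≥ 1. There exists C > 0 such that for all (x,y) ∈ N with x ≠ y, sup_{t>0} t |∂_t T_t^𝒜(x,y) − ∂_t W_t(x − y)| ≤ C (1 + |x|) / |x − y|^{n−1}. -/

import Mathlib

open MeasureTheory Real
open scoped ENNReal

/-- The local region `N = {(x,y) : |x-y| ≤ min(1, 1/|x|)}`. -/
def localN (n : ℕ) : Set (EuclideanSpace ℝ (Fin n) × EuclideanSpace ℝ (Fin n)) :=
  {p | ‖p.1 - p.2‖ ≤ 1 ∧ ‖p.1 - p.2‖ * ‖p.1‖ ≤ 1}

/-- The kernel `T_t^𝒜(x,y)` of the semigroup generated by `-𝒜`, where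
`𝒜 = -½Δ - x·∇` on `ℝⁿ`. -/
noncomputable def heatKerA (n : ℕ) (t : ℝ) (x y : EuclideanSpace ℝ (Fin n)) : ℝ :=
  Real.exp (-(n : ℝ) * t) * Real.pi ^ (-(n : ℝ) / 2) *
    (1 - Real.exp (-2 * t)) ^ (-(n : ℝ) / 2) *
    Real.exp (-‖x - Real.exp (-t) • y‖ ^ 2 / (1 - Real.exp (-2 * t)))

/-- The Euclidean heat kernel `W_t(z)` (for `-½Δ`). -/
noncomputable def heatKerW (n : ℕ) (t : ℝ) (z : EuclideanSpace ℝ (Fin n)) : ℝ :=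
  (2 * Real.pi * t) ^ (-(n : ℝ) / 2) * Real.exp (-‖z‖ ^ 2 / (2 * t))

section aux

lemma pow_le_exp_mul (k : ℕ) {x : ℝ} (hx : 0 ≤ x) : x ^ k ≤ k.factorial * exp x := by
  have h := Real.sum_le_exp_of_nonneg hx (k+1)
  have h2 : x ^ k / k.factorial ≤ exp x := le_trans (by
    exact Finset.single_le_sum (f := fun i => x ^ i / i.factorial)
      (fun i _ => by positivity) (Finset.self_mem_range_succ k)) h
  have hk : (0:ℝ) < k.factorial := by positivity
  rw [div_le_iff₀ hk] at h2; linarith [h2]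

lemma poly_gauss (k : ℕ) {w : ℝ} (hw : 0 ≤ w) :
    w ^ k * exp (-(w^2/2)) ≤ 2 ^ k * k.factorial + 1 := by
  have hexp : exp (-(w^2/2)) ≤ 1 := exp_le_one_iff.mpr (by nlinarith)
  have hexp0 : 0 < exp (-(w^2/2)) := exp_pos _
  rcases le_or_gt w 1 with h | h
  · have h1 : w ^ k ≤ 1 := pow_le_one₀ hw h
    have : (0:ℝ) ≤ 2 ^ k * k.factorial := by positivity
    nlinarith [mul_le_one₀ h1 hexp0.le hexp]
  · have h1 : w ^ k ≤ (w ^ 2) ^ k := by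
      apply pow_le_pow_left₀ hw
      nlinarith
    have h2 : (w ^ 2) ^ k = 2 ^ k * (w ^ 2 / 2) ^ k := by
      rw [div_pow, ← mul_div_assoc, mul_comm]
      field_simp
    have h3 : (w ^ 2 / 2) ^ k ≤ k.factorial * exp (w ^ 2 / 2) := pow_le_exp_mul k (by positivity)
    have h4 : exp (w^2/2) * exp (-(w^2/2)) = 1 := by rw [← exp_add]; simp
    have h5 : w ^ k * exp (-(w^2/2)) ≤ 2 ^ k * (k.factorial * exp (w^2/2)) * exp (-(w^2/2)) := by
      have := h1.trans (le_of_eq h2)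
      have h6 : 2 ^ k * (w ^ 2 / 2) ^ k ≤ 2 ^ k * ((k.factorial : ℝ) * exp (w^2/2)) :=
        mul_le_mul_of_nonneg_left h3 (by positivity)
      exact mul_le_mul_of_nonneg_right (this.trans h6) hexp0.le
    calc w ^ k * exp (-(w^2/2)) ≤ 2 ^ k * (k.factorial * exp (w^2/2)) * exp (-(w^2/2)) := h5
    _ = 2 ^ k * k.factorial := by rw [mul_assoc, mul_assoc, h4]; ring
    _ ≤ 2 ^ k * k.factorial + 1 := by linarith

/-- |e^a − 1| ≤ |a| e^|a| -/
lemma abs_exp_sub_one_le' (a : ℝ) : |exp a - 1| ≤ |a| * exp |a| := by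
  rcases le_or_gt 0 a with h | h
  · rw [abs_of_nonneg h, abs_of_nonneg (by nlinarith [add_one_le_exp a] : (0:ℝ) ≤ exp a - 1)]
    have k1 : exp a * (1 - a) ≤ exp a * exp (-a) :=
      mul_le_mul_of_nonneg_left (by nlinarith [add_one_le_exp (-a)]) (exp_pos a).le
    have k2 : exp a * exp (-a) = 1 := by rw [← exp_add]; simp
    nlinarith
  · rw [abs_of_neg h, abs_of_nonpos (by nlinarith [exp_le_one_iff.mpr h.le] : exp a - 1 ≤ 0)]
    nlinarith [add_one_le_exp a, exp_pos (-a), one_le_exp (by linarith : (0:ℝ) ≤ -a)]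

lemma one_sub_exp_le_sqrt {v : ℝ} (hv : 0 ≤ v) : 1 - exp (-v) ≤ Real.sqrt v := by
  rcases le_or_gt 1 v with h | h
  · have : 1 - exp (-v) ≤ 1 := by nlinarith [exp_pos (-v)]
    exact this.trans (by nlinarith [Real.sqrt_le_sqrt h, Real.sqrt_one])
  · have h1 : 1 - exp (-v) ≤ v := by nlinarith [add_one_le_exp (-v)]
    have s1 : Real.sqrt v ≤ 1 := by
      rw [show (1:ℝ) = Real.sqrt 1 by simp]; exact Real.sqrt_le_sqrt h.le
    have s2 : Real.sqrt v * Real.sqrt v = v := Real.mul_self_sqrt hv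
    nlinarith [Real.sqrt_nonneg v]


-- exp bounds on small arguments
lemma exp_quad {s : ℝ} (hs : |s| ≤ 1) : |Real.exp s - 1 - s| ≤ s ^ 2 :=
  Real.abs_exp_sub_one_sub_id_le hs



lemma g_le {t : ℝ} (ht : 0 < t) : 1 - Real.exp (-2*t) ≤ 2*t := by
  nlinarith [Real.add_one_le_exp (-2*t)]

lemma g_ge {t : ℝ} (ht : 0 < t) (ht4 : t ≤ 1/4) : t ≤ 1 - Real.exp (-2*t) := by
  have h := exp_quad (s := -2*t) (by rw [abs_of_nonpos (by linarith)]; linarith)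
  rw [abs_le] at h; nlinarith [h.1, h.2]

lemma b_le {t : ℝ} (ht : 0 < t) : 1 - Real.exp (-t) ≤ t := by
  nlinarith [Real.add_one_le_exp (-t)]

lemma b_ge {t : ℝ} (ht : 0 < t) (ht4 : t ≤ 1/4) : t/2 ≤ 1 - Real.exp (-t) := by
  have h := exp_quad (s := -t) (by rw [abs_of_nonpos (by linarith)]; linarith)
  rw [abs_le] at h; nlinarith [h.1, h.2]

lemma gA {t : ℝ} (ht : 0 < t) (ht4 : t ≤ 1/4) :
    |1 - Real.exp (-2*t) - 2*t*Real.exp (-2*t)| ≤ 4*t^2 := by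
  have h := exp_quad (s := 2*t) (by rw [abs_of_nonneg (by linarith)]; linarith)
  rw [abs_le] at h ⊢
  have he : Real.exp (2*t) * Real.exp (-2*t) = 1 := by rw [← Real.exp_add]; simp
  have hp : 0 < Real.exp (-2*t) := Real.exp_pos _
  have hl : Real.exp (-2*t) ≤ 1 := Real.exp_le_one_iff.mpr (by linarith)
  constructor <;> nlinarith [h.1, h.2]

lemma gB {t : ℝ} (ht : 0 < t) (ht4 : t ≤ 1/4) :
    |2*t*Real.exp (-t) - (1 - Real.exp (-2*t))| ≤ 2*t^2 := by
  have h1 := exp_quad (s := t) (by rw [abs_of_nonneg ht.le]; linarith)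
  have h2 := exp_quad (s := -t) (by rw [abs_of_nonpos (by linarith)]; linarith)
  rw [abs_le] at h1 h2 ⊢
  have he : Real.exp (t) * Real.exp (-t) = 1 := by rw [← Real.exp_add]; simp
  have he2 : Real.exp (-2*t) = Real.exp (-t) * Real.exp (-t) := by
    rw [← Real.exp_add]; ring_nf
  have hp : 0 < Real.exp (-t) := Real.exp_pos _
  have hl : Real.exp (-t) ≤ 1 := Real.exp_le_one_iff.mpr (by linarith)
  constructor <;> nlinarith [h1.1, h1.2, h2.1, h2.2]

-- kernel factorization
lemma kerA_factor (n : ℕ) (x y : EuclideanSpace ℝ (Fin n)) {t : ℝ} (ht : 0 < t) :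
    heatKerA n t x y = heatKerW n t (x - y) *
      (Real.exp (-(n:ℝ)*t) * ((1 - Real.exp (-2*t))/(2*t)) ^ (-(n:ℝ)/2) *
        Real.exp (-(‖x - Real.exp (-t) • y‖^2/(1 - Real.exp (-2*t)) - ‖x - y‖^2/(2*t)))) := by
  have hgpos : 0 < 1 - Real.exp (-2*t) := by
    have : Real.exp (-2*t) < 1 := by rw [Real.exp_lt_one_iff]; linarith
    linarith
  have h2pi : (0:ℝ) < 2 * Real.pi * t := by positivity
  have hrp : Real.pi ^ (-(n:ℝ)/2) * (1 - Real.exp (-2*t)) ^ (-(n:ℝ)/2)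
      = (2*Real.pi*t) ^ (-(n:ℝ)/2) * ((1 - Real.exp (-2*t))/(2*t)) ^ (-(n:ℝ)/2) := by
    rw [← Real.mul_rpow Real.pi_pos.le hgpos.le, ← Real.mul_rpow h2pi.le (by positivity)]
    congr 1
    field_simp
  have hexp : Real.exp (-‖x - Real.exp (-t) • y‖ ^ 2 / (1 - Real.exp (-2 * t)))
      = Real.exp (-‖x-y‖^2/(2*t)) *
        Real.exp (-(‖x - Real.exp (-t) • y‖^2/(1 - Real.exp (-2*t)) - ‖x - y‖^2/(2*t))) := by
    rw [← Real.exp_add]; congr 1; ring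
  simp only [heatKerA, heatKerW]
  rw [show (-2) * t = -(2*t) by ring] at *
  rw [hexp]
  rw [mul_assoc (Real.exp (-(n:ℝ)*t)), hrp]
  ring


variable {n : ℕ}

lemma norm_sub_smul_sq (x y : EuclideanSpace ℝ (Fin n)) (c : ℝ) :
    ‖x - c • y‖ ^ 2 = ‖x‖ ^ 2 - 2 * (inner ℝ x y) * c + ‖y‖ ^ 2 * c ^ 2 := by
  rw [norm_sub_sq_real, real_inner_smul_right, norm_smul]
  simp [mul_pow]; ring

lemma norm_add_smul_sq (z y : EuclideanSpace ℝ (Fin n)) (c : ℝ) :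
    ‖z + c • y‖ ^ 2 = ‖z‖^2 + 2*c*(inner ℝ z y) + c^2*‖y‖^2 := by
  rw [norm_add_sq_real, real_inner_smul_right, norm_smul]
  simp [mul_pow]; ring

/-- derivative of t ↦ heatKerA -/
lemma derivA (x y : EuclideanSpace ℝ (Fin n)) {t : ℝ} (ht : 0 < t) :
    deriv (fun s => heatKerA n s x y) t =
      heatKerA n t x y *
        (-(n:ℝ) - (n:ℝ) * Real.exp (-2*t) / (1 - Real.exp (-2*t))
          - 2 * Real.exp (-t) * (inner ℝ (x - Real.exp (-t) • y) y) / (1 - Real.exp (-2*t))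
          + 2 * Real.exp (-2*t) * ‖x - Real.exp (-t) • y‖ ^ 2 / (1 - Real.exp (-2*t)) ^ 2) := by
  set g := 1 - Real.exp (-2*t) with hgdef
  have hgpos : 0 < g := by
    have : Real.exp (-2*t) < 1 := by
      rw [Real.exp_lt_one_iff]; linarith
    simp [hgdef]; linarith
  have hgne : g ≠ 0 := ne_of_gt hgpos
  -- pieces
  have h1 : HasDerivAt (fun s : ℝ => Real.exp (-(n:ℝ) * s))
      (Real.exp (-(n:ℝ)*t) * (-(n:ℝ))) t := by
    simpa using ((hasDerivAt_id t).const_mul (-(n:ℝ))).exp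
  have hg : HasDerivAt (fun s : ℝ => 1 - Real.exp (-2*s)) (2 * Real.exp (-2*t)) t := by
    have : HasDerivAt (fun s : ℝ => Real.exp (-2*s)) (Real.exp (-2*t) * (-2)) t := by
      simpa using ((hasDerivAt_id t).const_mul (-2:ℝ)).exp
    have := this.const_sub 1
    exact this.congr_deriv (by ring)
  have h3 : HasDerivAt (fun s : ℝ => (1 - Real.exp (-2*s)) ^ (-(n:ℝ)/2))
      ((-(n:ℝ)/2) * g ^ ((-(n:ℝ)/2) - 1) * (2 * Real.exp (-2*t))) t := by
    have := hg.rpow_const (p := -(n:ℝ)/2) (Or.inl hgne)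
    convert this using 1; rw [hgdef]; ring
  have he : HasDerivAt (fun s : ℝ => Real.exp (-s)) (-Real.exp (-t)) t := by
    simpa using ((hasDerivAt_id t).neg).exp
  have hq : HasDerivAt (fun s : ℝ => ‖x - Real.exp (-s) • y‖ ^ 2)
      (2 * (inner ℝ x y) * Real.exp (-t) - ‖y‖^2 * (2 * Real.exp (-t) * Real.exp (-t))) t := by
    have key : (fun s : ℝ => ‖x - Real.exp (-s) • y‖ ^ 2)
        = fun s : ℝ => ‖x‖^2 - 2 * (inner ℝ x y) * Real.exp (-s) + ‖y‖^2 * Real.exp (-s) ^ 2 :=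
      funext fun s => norm_sub_smul_sq x y _
    rw [key]
    have p1 : HasDerivAt (fun s : ℝ => ‖x‖^2 - 2 * (inner ℝ x y) * Real.exp (-s))
        (-(2 * (inner ℝ x y) * (-Real.exp (-t)))) t := (he.const_mul _).const_sub _
    have p2 : HasDerivAt (fun s : ℝ => ‖y‖^2 * Real.exp (-s) ^ 2)
        (‖y‖^2 * (2 * Real.exp (-t) ^ 1 * (-Real.exp (-t)))) t := (he.pow 2).const_mul _
    exact (p1.add p2).congr_deriv (by ring)
  have hqg : HasDerivAt (fun s : ℝ => -‖x - Real.exp (-s) • y‖ ^ 2 / (1 - Real.exp (-2*s)))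
      ((-(2 * (inner ℝ x y) * Real.exp (-t) - ‖y‖^2 * (2 * Real.exp (-t) * Real.exp (-t))) * g
        - (-‖x - Real.exp (-t) • y‖ ^ 2) * (2 * Real.exp (-2*t))) / g ^ 2) t :=
    hq.neg.div hg hgne
  have h4 : HasDerivAt (fun s : ℝ => Real.exp (-‖x - Real.exp (-s) • y‖ ^ 2 / (1 - Real.exp (-2*s))))
      (Real.exp (-‖x - Real.exp (-t) • y‖ ^ 2 / g) *
        ((-(2 * (inner ℝ x y) * Real.exp (-t) - ‖y‖^2 * (2 * Real.exp (-t) * Real.exp (-t))) * g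
        - (-‖x - Real.exp (-t) • y‖ ^ 2) * (2 * Real.exp (-2*t))) / g ^ 2)) t := hqg.exp
  have H : HasDerivAt (fun s : ℝ => (Real.exp (-(n:ℝ) * s) * Real.pi ^ (-(n:ℝ)/2)) *
      ((1 - Real.exp (-2*s)) ^ (-(n:ℝ)/2)) *
      (Real.exp (-‖x - Real.exp (-s) • y‖ ^ 2 / (1 - Real.exp (-2*s))))) _ t :=
    (((h1.mul_const (Real.pi ^ (-(n:ℝ)/2))).mul h3).mul h4)
  have Heq : (fun s : ℝ => heatKerA n s x y) =
      fun s => (Real.exp (-(n:ℝ) * s) * Real.pi ^ (-(n:ℝ)/2)) *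
        ((1 - Real.exp (-2*s)) ^ (-(n:ℝ)/2)) *
        (Real.exp (-‖x - Real.exp (-s) • y‖ ^ 2 / (1 - Real.exp (-2*s)))) := by
    funext s; simp [heatKerA]
  rw [Heq, H.deriv]
  -- now pure algebra
  have hrs : g ^ ((-(n:ℝ)/2) - 1) = g ^ (-(n:ℝ)/2) / g := by
    rw [Real.rpow_sub hgpos, Real.rpow_one]
  rw [hrs]
  simp only [heatKerA, ← hgdef]
  have hinner : (inner ℝ (x - Real.exp (-t) • y) y)
      = (inner ℝ x y) - Real.exp (-t) * ‖y‖^2 := by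
    rw [inner_sub_left, real_inner_smul_left, real_inner_self_eq_norm_sq]
  rw [hinner]
  simp only [Pi.mul_apply, ← hgdef]
  field_simp
  ring

/-- derivative of t ↦ heatKerW -/
lemma derivW (z : EuclideanSpace ℝ (Fin n)) {t : ℝ} (ht : 0 < t) :
    deriv (fun s => heatKerW n s z) t =
      heatKerW n t z * (-(n:ℝ)/(2*t) + ‖z‖^2/(2*t^2)) := by
  have htne : t ≠ 0 := ne_of_gt ht
  have h2pi : (0:ℝ) < 2 * Real.pi * t := by positivity
  have hlin : HasDerivAt (fun s : ℝ => 2 * Real.pi * s) (2 * Real.pi) t := by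
    simpa using (hasDerivAt_id t).const_mul (2 * Real.pi)
  have h1 : HasDerivAt (fun s : ℝ => (2 * Real.pi * s) ^ (-(n:ℝ)/2))
      ((-(n:ℝ)/2) * (2 * Real.pi * t) ^ ((-(n:ℝ)/2) - 1) * (2 * Real.pi)) t := by
    have := hlin.rpow_const (p := -(n:ℝ)/2) (Or.inl (ne_of_gt h2pi))
    convert this using 1; ring
  have h2 : HasDerivAt (fun s : ℝ => -‖z‖^2 / (2 * s))
      (((0:ℝ) * (2*t) - (-‖z‖^2) * 2) / (2*t)^2) t := by
    exact (hasDerivAt_const t (-‖z‖^2)).div (by simpa using (hasDerivAt_id t).const_mul 2)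
      (by positivity)
  have h3 := h2.exp
  have H : HasDerivAt (fun s : ℝ => (2 * Real.pi * s) ^ (-(n:ℝ)/2) * Real.exp (-‖z‖^2 / (2*s))) _ t :=
    h1.mul h3
  have Heq : (fun s : ℝ => heatKerW n s z)
      = fun s : ℝ => (2 * Real.pi * s) ^ (-(n:ℝ)/2) * Real.exp (-‖z‖^2 / (2*s)) := by
    funext s; simp [heatKerW]
  rw [Heq, H.deriv]
  have hrs : (2 * Real.pi * t) ^ ((-(n:ℝ)/2) - 1)
      = (2 * Real.pi * t) ^ (-(n:ℝ)/2) / (2 * Real.pi * t) := by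
    rw [Real.rpow_sub h2pi, Real.rpow_one]
  rw [hrs]
  simp only [heatKerW]
  have hpine : Real.pi ≠ 0 := Real.pi_ne_zero
  field_simp
  ring


lemma bd_E1 {t g b r ny ip : ℝ} (ht : 0 < t) (hgt : t ≤ g) (hg2t : g ≤ 2*t)
    (hgl : 2*t - 4*t^2 ≤ g) (h1bu : 1-b ≤ t) (h1b0 : 0 ≤ 1-b)
    (hip : |ip| ≤ r*ny) (hr0 : 0 ≤ r) (hny0 : 0 ≤ ny) :
    |r^2*(2*t-g)/(2*t*g) + 2*(1-b)*ip/g| ≤ 2*r^2 + 2*(r*ny) := by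
  have hgpos : 0 < g := lt_of_lt_of_le ht hgt
  have h2tg0 : (0:ℝ) ≤ 2*t - g := by linarith
  have h2tgb : 2*t - g ≤ 4*t^2 := by linarith
  have p1 : |r^2*(2*t-g)/(2*t*g)| ≤ 2*r^2 := by
    have hnn : 0 ≤ r^2*(2*t-g)/(2*t*g) :=
      div_nonneg (mul_nonneg (sq_nonneg r) h2tg0) (by positivity)
    rw [abs_of_nonneg hnn]
    calc r^2*(2*t-g)/(2*t*g) ≤ r^2*(4*t^2)/(2*t*t) := by
          apply div_le_div₀ (by positivity) (mul_le_mul_of_nonneg_left h2tgb (sq_nonneg r))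
            (by positivity) (by nlinarith)
    _ = 2*r^2 := by field_simp; ring
  have p2 : |2*(1-b)*ip/g| ≤ 2*(r*ny) := by
    rw [abs_div, abs_of_nonneg hgpos.le, abs_mul, abs_mul,
      abs_of_nonneg (by norm_num : (0:ℝ) ≤ 2), abs_of_nonneg h1b0]
    calc 2*(1-b)*|ip|/g ≤ 2*t*(r*ny)/t := by
          apply div_le_div₀ (by positivity) _ ht hgt
          have k1 : (1-b)*|ip| ≤ t*(r*ny) := mul_le_mul h1bu hip (abs_nonneg _) ht.le
          nlinarith
    _ = 2*(r*ny) := by field_simp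
  calc |r^2*(2*t-g)/(2*t*g) + 2*(1-b)*ip/g|
      ≤ |r^2*(2*t-g)/(2*t*g)| + |2*(1-b)*ip/g| := abs_add_le _ _
  _ ≤ 2*r^2 + 2*(r*ny) := by linarith

lemma bd_tQ {t w r : ℝ} (n : ℕ) (ht : 0 < t) (hw2 : w^2/2 = r^2/(2*t)) (hr0 : 0 ≤ r) :
    t*|(-(n:ℝ)/(2*t) + r^2/(2*t^2))| ≤ (n:ℝ)/2 + w^2/2 := by
  have h1 : |(-(n:ℝ)/(2*t) + r^2/(2*t^2))| ≤ (n:ℝ)/(2*t) + r^2/(2*t^2) := by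
    calc |(-(n:ℝ)/(2*t) + r^2/(2*t^2))| ≤ |(-(n:ℝ)/(2*t))| + |r^2/(2*t^2)| := abs_add_le _ _
    _ = (n:ℝ)/(2*t) + r^2/(2*t^2) := by
        rw [abs_div, abs_div, abs_neg, abs_of_nonneg (Nat.cast_nonneg n : (0:ℝ) ≤ n),
          abs_of_nonneg (by positivity : (0:ℝ) ≤ 2*t), abs_of_nonneg (by positivity : (0:ℝ) ≤ r^2),
          abs_of_nonneg (by positivity : (0:ℝ) ≤ 2*t^2)]
  have h2 : t*((n:ℝ)/(2*t) + r^2/(2*t^2)) = (n:ℝ)/2 + r^2/(2*t) := by field_simp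
  calc t*|(-(n:ℝ)/(2*t) + r^2/(2*t^2))| ≤ t*((n:ℝ)/(2*t) + r^2/(2*t^2)) :=
        mul_le_mul_of_nonneg_left h1 ht.le
  _ = (n:ℝ)/2 + r^2/(2*t) := h2
  _ = (n:ℝ)/2 + w^2/2 := by rw [hw2]

lemma g_ge2 {t : ℝ} (ht : 0 < t) (ht4 : t ≤ 1/4) : 2*t - 4*t^2 ≤ 1 - Real.exp (-2*t) := by
  have h := Real.abs_exp_sub_one_sub_id_le (x := -2*t) (by rw [abs_of_nonpos (by linarith)]; linarith)
  rw [abs_le] at h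
  nlinarith [h.1, h.2]


noncomputable def Cg (k : ℕ) : ℝ := 2^k * k.factorial + 1
lemma Cg_pos (k : ℕ) : 0 < Cg k := by unfold Cg; positivity
lemma poly_gauss' (k : ℕ) {w : ℝ} (hw : 0 ≤ w) :
    w ^ k * Real.exp (-(w^2/2)) ≤ Cg k := poly_gauss k hw

-- scalar bounds, t small
section scalars
variable {t g b e2 r ny ip X : ℝ}

lemma bd_logR (ht : 0 < t) (hgt : t ≤ g) (hg2t : g ≤ 2*t) (hgl : 2*t - 4*t^2 ≤ g) :
    |Real.log (g/(2*t))| ≤ 4*t := by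
  have hgpos : 0 < g := lt_of_lt_of_le ht hgt
  have hRpos : (0:ℝ) < g/(2*t) := by positivity
  have hR1 : g/(2*t) ≤ 1 := by rw [div_le_one (by linarith)]; linarith
  have hnonpos : Real.log (g/(2*t)) ≤ 0 := Real.log_nonpos hRpos.le hR1
  have hinv : -Real.log (g/(2*t)) = Real.log ((2*t)/g) := by
    rw [← Real.log_inv]; congr 1; rw [inv_div]
  have hsub : Real.log ((2*t)/g) ≤ (2*t)/g - 1 := Real.log_le_sub_one_of_pos (by positivity)
  rw [abs_of_nonpos hnonpos, hinv]
  have h1 : (2*t)/g - 1 = (2*t-g)/g := by field_simp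
  have h2 : (2*t-g)/g ≤ 4*t^2/t := by
    apply div_le_div₀ (by positivity) (by linarith) ht hgt
  have h3 : 4*t^2/t = 4*t := by field_simp
  linarith [hsub.trans (by rw [h1] at hsub ⊢; linarith [h2.trans_eq h3] : (2*t)/g - 1 ≤ 4*t)]

lemma bd_S2 (n : ℝ) (hn0 : 0 ≤ n) (ht : 0 < t) (hgt : t ≤ g)
    (hga : |g - 2*t*e2| ≤ 4*t^2) : |n*(g-2*t*e2)/(2*t*g)| ≤ 2*n := by
  have hgpos : 0 < g := lt_of_lt_of_le ht hgt
  rw [abs_div, abs_mul, abs_of_nonneg hn0, abs_of_nonneg (by positivity : (0:ℝ) ≤ 2*t*g)]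
  rw [div_le_iff₀ (by positivity)]
  have h1 : n * |g - 2*t*e2| ≤ n * (4*t^2) := mul_le_mul_of_nonneg_left hga hn0
  have h2 : 4*n*t*t ≤ 4*n*t*g := mul_le_mul_of_nonneg_left hgt (by positivity)
  nlinarith

lemma bd_S3 (ht : 0 < t) (hgt : t ≤ g) (hb0 : 0 ≤ b) (hb1 : b ≤ 1) (h1bu : 1-b ≤ t)
    (h1b0 : 0 ≤ 1-b) (hip : |ip| ≤ r*ny) (hr0 : 0 ≤ r) (hny0 : 0 ≤ ny) :
    |2*b*(ip+(1-b)*ny^2)/g| ≤ 2*(r*ny/t) + 2*ny^2 := by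
  have hgpos : 0 < g := lt_of_lt_of_le ht hgt
  rw [abs_div, abs_of_nonneg hgpos.le]
  rw [div_le_iff₀ hgpos]
  have h1 : |2*b*(ip+(1-b)*ny^2)| ≤ 2*(r*ny + t*ny^2) := by
    rw [abs_mul, abs_mul, abs_of_nonneg (by norm_num : (0:ℝ) ≤ 2), abs_of_nonneg hb0]
    have h2 : |ip+(1-b)*ny^2| ≤ r*ny + t*ny^2 := by
      calc |ip+(1-b)*ny^2| ≤ |ip| + |(1-b)*ny^2| := abs_add_le _ _
      _ ≤ r*ny + t*ny^2 := by
          rw [abs_mul, abs_of_nonneg h1b0, abs_of_nonneg (by positivity : (0:ℝ) ≤ ny^2)]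
          nlinarith
    nlinarith [abs_nonneg (ip+(1-b)*ny^2)]
  have h3 : (2*(r*ny/t) + 2*ny^2)*t = 2*(r*ny + t*ny^2) := by field_simp
  have h4 : (2*(r*ny/t) + 2*ny^2)*t ≤ (2*(r*ny/t) + 2*ny^2)*g := by
    have : 0 ≤ 2*(r*ny/t) + 2*ny^2 := by positivity
    nlinarith
  linarith
end scalars

section scalars2
variable {t g b e2 r ny ip : ℝ}

lemma bd_S4a (ht : 0 < t) (hgt : t ≤ g) (hg2t : g ≤ 2*t) (he2b : e2 = b^2)
    (hb0 : 0 ≤ b) (hb1 : b ≤ 1) (hgb : |2*t*b - g| ≤ 2*t^2) (hr0 : 0 ≤ r) :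
    |r^2*(4*t^2*e2-g^2)/(2*t^2*g^2)| ≤ 4*(r^2/t) := by
  have hgpos : 0 < g := lt_of_lt_of_le ht hgt
  have key : |4*t^2*e2-g^2| ≤ 8*t^3 := by
    have hfac : 4*t^2*e2-g^2 = (2*t*b-g)*(2*t*b+g) := by rw [he2b]; ring
    rw [hfac, abs_mul]
    have h1 : |2*t*b+g| ≤ 4*t := by
      rw [abs_of_nonneg (by positivity)]; nlinarith
    calc |2*t*b-g| * |2*t*b+g| ≤ (2*t^2) * (4*t) :=
          mul_le_mul hgb h1 (abs_nonneg _) (by positivity)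
    _ = 8*t^3 := by ring
  rw [abs_div, abs_mul, abs_of_nonneg (by positivity : (0:ℝ) ≤ r^2),
    abs_of_nonneg (by positivity : (0:ℝ) ≤ 2*t^2*g^2)]
  calc r^2*|4*t^2*e2-g^2| / (2*t^2*g^2) ≤ r^2*(8*t^3) / (2*t^2*(t*t)) := by
        apply div_le_div₀ (by positivity) (mul_le_mul_of_nonneg_left key (by positivity))
          (by positivity)
        have : t*t ≤ g*g := mul_le_mul hgt hgt ht.le hgpos.le
        nlinarith
  _ = 4*(r^2/t) := by field_simp; ring

lemma bd_S4b (ht : 0 < t) (hgt : t ≤ g) (he20 : 0 ≤ e2) (he21 : e2 ≤ 1)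
    (h1bu : 1-b ≤ t) (h1b0 : 0 ≤ 1-b) (hip : |ip| ≤ r*ny) (hr0 : 0 ≤ r) (hny0 : 0 ≤ ny) :
    |4*e2*(1-b)*ip/g^2| ≤ 4*(r*ny/t) := by
  have hgpos : 0 < g := lt_of_lt_of_le ht hgt
  rw [abs_div, abs_of_nonneg (by positivity : (0:ℝ) ≤ g^2)]
  have h1a : e2*(1-b) ≤ t := by nlinarith
  have h1b : e2*(1-b)*|ip| ≤ t*(r*ny) := mul_le_mul h1a hip (abs_nonneg _) ht.le
  have h1 : |4*e2*(1-b)*ip| ≤ 4*(t*(r*ny)) := by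
    rw [abs_mul, abs_mul, abs_mul]
    rw [abs_of_nonneg (by norm_num : (0:ℝ) ≤ 4), abs_of_nonneg he20, abs_of_nonneg h1b0]
    nlinarith [h1b]
  calc |4*e2*(1-b)*ip| / g^2 ≤ (4*(t*(r*ny))) / (t*t) := by
        apply div_le_div₀ (by positivity) h1 (by positivity)
        nlinarith [mul_le_mul hgt hgt ht.le hgpos.le]
  _ = 4*(r*ny/t) := by field_simp

lemma bd_S4c (ht : 0 < t) (hgt : t ≤ g) (he20 : 0 ≤ e2) (he21 : e2 ≤ 1)
    (h1bu : 1-b ≤ t) (h1b0 : 0 ≤ 1-b) (hny0 : 0 ≤ ny) :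
    |2*e2*(1-b)^2*ny^2/g^2| ≤ 2*ny^2 := by
  have hgpos : 0 < g := lt_of_lt_of_le ht hgt
  rw [abs_div, abs_of_nonneg (by positivity : (0:ℝ) ≤ g^2)]
  have hb2 : (1-b)^2 ≤ t^2 := by nlinarith
  have h1a : e2*(1-b)^2 ≤ t^2 := by nlinarith [sq_nonneg (1-b)]
  have h1 : |2*e2*(1-b)^2*ny^2| ≤ 2*(t^2*ny^2) := by
    rw [abs_mul, abs_mul, abs_mul]
    rw [abs_of_nonneg (by norm_num : (0:ℝ) ≤ 2), abs_of_nonneg he20,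
      abs_of_nonneg (by positivity : (0:ℝ) ≤ (1-b)^2), abs_of_nonneg (by positivity : (0:ℝ) ≤ ny^2)]
    nlinarith [mul_le_mul_of_nonneg_right h1a (by positivity : (0:ℝ) ≤ ny^2)]
  calc |2*e2*(1-b)^2*ny^2| / g^2 ≤ (2*(t^2*ny^2)) / (t*t) := by
        apply div_le_div₀ (by positivity) h1 (by positivity)
        nlinarith [mul_le_mul hgt hgt ht.le hgpos.le]
  _ = 2*ny^2 := by field_simp

end scalars2

section scalars3
variable {t g b e2 r ny ip σ w X E₂ : ℝ}

/-- combined |P - Q| bound (scalar) -/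
lemma bd_PQ (n : ℕ) (ht : 0 < t) (hgt : t ≤ g) (hg2t : g ≤ 2*t)
    (he2b : e2 = b^2) (he20 : 0 ≤ e2) (he21 : e2 ≤ 1)
    (hb0 : 0 ≤ b) (hb1 : b ≤ 1) (h1bu : 1-b ≤ t) (h1b0 : 0 ≤ 1-b)
    (hip : |ip| ≤ r*ny) (hr0 : 0 ≤ r) (hny0 : 0 ≤ ny)
    (hga : |g - 2*t*e2| ≤ 4*t^2) (hgb : |2*t*b - g| ≤ 2*t^2)
    {q uy : ℝ} (hq : q = r^2 + 2*(1-b)*ip + (1-b)^2*ny^2) (huy : uy = ip + (1-b)*ny^2) :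
    |(-(n:ℝ) - (n:ℝ)*e2/g - 2*b*uy/g + 2*e2*q/g^2) - (-(n:ℝ)/(2*t) + r^2/(2*t^2))|
      ≤ 3*(n:ℝ) + 6*(r*ny/t) + 4*ny^2 + 4*(r^2/t) := by
  have hgpos : 0 < g := lt_of_lt_of_le ht hgt
  have hid : (-(n:ℝ) - (n:ℝ)*e2/g - 2*b*uy/g + 2*e2*q/g^2) - (-(n:ℝ)/(2*t) + r^2/(2*t^2))
      = (-(n:ℝ)) + ((n:ℝ)*(g-2*t*e2)/(2*t*g)) + (-(2*b*(ip+(1-b)*ny^2)/g))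
        + (r^2*(4*t^2*e2-g^2)/(2*t^2*g^2)) + (4*e2*(1-b)*ip/g^2) + (2*e2*(1-b)^2*ny^2/g^2) := by
    rw [hq, huy]
    field_simp
    ring
  rw [hid]
  have h1 : |(-(n:ℝ))| = (n:ℝ) := by simp
  have h2 := bd_S2 (n:ℝ) (Nat.cast_nonneg n) ht hgt hga
  have h3 := bd_S3 ht hgt hb0 hb1 h1bu h1b0 hip hr0 hny0
  have h4 := bd_S4a ht hgt hg2t he2b hb0 hb1 hgb hr0
  have h5 := bd_S4b ht hgt he20 he21 h1bu h1b0 hip hr0 hny0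
  have h6 := bd_S4c ht hgt he20 he21 h1bu h1b0 hny0
  have habs : ∀ a b' : ℝ, |a + b'| ≤ |a| + |b'| := fun a b' => abs_add_le a b'
  calc |(-(n:ℝ)) + ((n:ℝ)*(g-2*t*e2)/(2*t*g)) + (-(2*b*(ip+(1-b)*ny^2)/g))
        + (r^2*(4*t^2*e2-g^2)/(2*t^2*g^2)) + (4*e2*(1-b)*ip/g^2) + (2*e2*(1-b)^2*ny^2/g^2)|
      ≤ |(-(n:ℝ))| + |(n:ℝ)*(g-2*t*e2)/(2*t*g)| + |2*b*(ip+(1-b)*ny^2)/g|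
        + |r^2*(4*t^2*e2-g^2)/(2*t^2*g^2)| + |4*e2*(1-b)*ip/g^2| + |2*e2*(1-b)^2*ny^2/g^2| := by
        have := abs_add_le ((-(n:ℝ)) + ((n:ℝ)*(g-2*t*e2)/(2*t*g)) + (-(2*b*(ip+(1-b)*ny^2)/g))
          + (r^2*(4*t^2*e2-g^2)/(2*t^2*g^2)) + (4*e2*(1-b)*ip/g^2)) (2*e2*(1-b)^2*ny^2/g^2)
        have h7 := abs_add_le ((-(n:ℝ)) + ((n:ℝ)*(g-2*t*e2)/(2*t*g)) + (-(2*b*(ip+(1-b)*ny^2)/g))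
          + (r^2*(4*t^2*e2-g^2)/(2*t^2*g^2))) (4*e2*(1-b)*ip/g^2)
        have h8 := abs_add_le ((-(n:ℝ)) + ((n:ℝ)*(g-2*t*e2)/(2*t*g)) + (-(2*b*(ip+(1-b)*ny^2)/g)))
          (r^2*(4*t^2*e2-g^2)/(2*t^2*g^2))
        have h9 := abs_add_le ((-(n:ℝ)) + ((n:ℝ)*(g-2*t*e2)/(2*t*g))) (-(2*b*(ip+(1-b)*ny^2)/g))
        have h10 := abs_add_le (-(n:ℝ)) ((n:ℝ)*(g-2*t*e2)/(2*t*g))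
        rw [abs_neg (2*b*(ip+(1-b)*ny^2)/g)] at h9
        linarith
  _ ≤ 3*(n:ℝ) + 6*(r*ny/t) + 4*ny^2 + 4*(r^2/t) := by rw [h1]; linarith
end scalars3

section scalars4
variable {t g b r ny ip σ w X E₁ E₂ : ℝ}

lemma bd_H1a (n : ℕ) (ht : 0 < t) (ht4 : t ≤ 1/4) (hlog : |Real.log (g/(2*t))| ≤ 4*t)
    (hE1 : |E₁| ≤ 2*r^2 + 2*(r*ny)) (hr1 : r ≤ 1) (hr0 : 0 ≤ r) (hry : r*ny ≤ 2) :
    |(-(n:ℝ)*t + (-(n:ℝ)/2)*Real.log (g/(2*t)) - E₁)| ≤ (n:ℝ) + 6 := by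
  have h1 : |(-(n:ℝ)*t)| ≤ (n:ℝ)/4 := by
    rw [abs_mul, abs_neg, abs_of_nonneg (Nat.cast_nonneg n : (0:ℝ) ≤ n), abs_of_nonneg ht.le]
    nlinarith [Nat.cast_nonneg n (α := ℝ)]
  have h2 : |(-(n:ℝ)/2)*Real.log (g/(2*t))| ≤ (n:ℝ)/2 := by
    rw [abs_mul]
    have : |(-(n:ℝ)/2)| = (n:ℝ)/2 := by rw [abs_div, abs_neg, abs_of_nonneg (Nat.cast_nonneg n : (0:ℝ) ≤ n)]; norm_num
    rw [this]
    nlinarith [abs_nonneg (Real.log (g/(2*t))), Nat.cast_nonneg n (α := ℝ)]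
  have h3 : |E₁| ≤ 6 := by nlinarith
  calc |(-(n:ℝ)*t + (-(n:ℝ)/2)*Real.log (g/(2*t)) - E₁)|
      ≤ |(-(n:ℝ)*t + (-(n:ℝ)/2)*Real.log (g/(2*t)))| + |E₁| := abs_sub _ _
  _ ≤ |(-(n:ℝ)*t)| + |(-(n:ℝ)/2)*Real.log (g/(2*t))| + |E₁| := by
      linarith [abs_add_le (-(n:ℝ)*t) ((-(n:ℝ)/2)*Real.log (g/(2*t)))]
  _ ≤ (n:ℝ) + 6 := by linarith

lemma bd_H1s (n : ℕ) (ht : 0 < t) (hσ : 0 < σ) (htσ : t ≤ σ) (hσ1 : σ ≤ 1)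
    (hrσw : r = σ*w) (hw0 : 0 ≤ w) (hny0 : 0 ≤ ny)
    (hlog : |Real.log (g/(2*t))| ≤ 4*t)
    (hE1 : |E₁| ≤ 2*r^2 + 2*(r*ny)) (hr1 : r ≤ 1) (hr0 : 0 ≤ r) :
    |(-(n:ℝ)*t + (-(n:ℝ)/2)*Real.log (g/(2*t)) - E₁)| ≤ σ*((3*(n:ℝ)) + 2*w + 2*(w*ny)) := by
  have h1 : |(-(n:ℝ)*t)| ≤ (n:ℝ)*σ := by
    rw [abs_mul, abs_neg, abs_of_nonneg (Nat.cast_nonneg n : (0:ℝ) ≤ n), abs_of_nonneg ht.le]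
    nlinarith [Nat.cast_nonneg n (α := ℝ)]
  have h2 : |(-(n:ℝ)/2)*Real.log (g/(2*t))| ≤ 2*(n:ℝ)*σ := by
    rw [abs_mul]
    have he : |(-(n:ℝ)/2)| = (n:ℝ)/2 := by
      rw [abs_div, abs_neg, abs_of_nonneg (Nat.cast_nonneg n : (0:ℝ) ≤ n)]; norm_num
    rw [he]
    nlinarith [abs_nonneg (Real.log (g/(2*t))), Nat.cast_nonneg n (α := ℝ)]
  have hr2 : r^2 ≤ σ*w := by nlinarith
  have hrny : r*ny ≤ σ*(w*ny) := by nlinarith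
  have h3 : |E₁| ≤ 2*(σ*w) + 2*(σ*(w*ny)) := by nlinarith
  calc |(-(n:ℝ)*t + (-(n:ℝ)/2)*Real.log (g/(2*t)) - E₁)|
      ≤ |(-(n:ℝ)*t + (-(n:ℝ)/2)*Real.log (g/(2*t)))| + |E₁| := abs_sub _ _
  _ ≤ |(-(n:ℝ)*t)| + |(-(n:ℝ)/2)*Real.log (g/(2*t))| + |E₁| := by
      linarith [abs_add_le (-(n:ℝ)*t) ((-(n:ℝ)/2)*Real.log (g/(2*t)))]
  _ ≤ σ*((3*(n:ℝ)) + 2*w + 2*(w*ny)) := by nlinarith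

lemma bd_E2 (ht : 0 < t) (hgt : t ≤ g) (hg2t : g ≤ 2*t) (h1bl : t/2 ≤ 1-b) (h1bu : 1-b ≤ t)
    (hny0 : 0 ≤ ny) :
    t*ny^2/8 ≤ (1-b)^2*ny^2/g ∧ (1-b)^2*ny^2/g ≤ t*ny^2 := by
  have hgpos : 0 < g := lt_of_lt_of_le ht hgt
  constructor
  · rw [div_le_div_iff₀ (by norm_num) hgpos]
    have k1 : t^2 ≤ 4*(1-b)^2 := by nlinarith
    have k2 : t*ny^2*g ≤ t*ny^2*(2*t) := by nlinarith [mul_le_mul_of_nonneg_left hg2t (by positivity : (0:ℝ) ≤ t*ny^2)]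
    nlinarith [mul_le_mul_of_nonneg_right k1 (sq_nonneg ny)]
  · rw [div_le_iff₀ hgpos]
    have h1 : (1-b)^2 ≤ t^2 := by nlinarith
    have h2 : t^2 ≤ t*g := by nlinarith
    nlinarith [mul_le_mul_of_nonneg_right h1 (sq_nonneg ny),
      mul_le_mul_of_nonneg_right h2 (sq_nonneg ny)]

/-- |exp(H₁-E₂) - 1| ≤ exp(BH)*(s1+s2) -/
lemma bd_expdiff {H₁ BH s1 s2 : ℝ} (hH : |H₁| ≤ BH) (hHs : |H₁| ≤ s2) (hE0 : 0 ≤ E₂)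
    (hEs : Real.sqrt E₂ ≤ s1) :
    |Real.exp (H₁ - E₂) - 1| ≤ Real.exp BH * (s1 + s2) := by
  have hsplit : Real.exp (H₁ - E₂) - 1
      = Real.exp H₁ * (Real.exp (-E₂) - 1) + (Real.exp H₁ - 1) := by
    rw [Real.exp_sub]
    have : Real.exp (-E₂) = (Real.exp E₂)⁻¹ := Real.exp_neg E₂
    rw [this]
    field_simp
    ring
  have hexpH : Real.exp H₁ ≤ Real.exp BH := Real.exp_le_exp.mpr (le_trans (le_abs_self _) hH)
  have h1 : |Real.exp H₁ * (Real.exp (-E₂) - 1)| ≤ Real.exp BH * s1 := by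
    rw [abs_mul, abs_of_nonneg (Real.exp_pos _).le]
    have he1 : |Real.exp (-E₂) - 1| = 1 - Real.exp (-E₂) := by
      rw [abs_of_nonpos]; ring
      nlinarith [Real.exp_le_one_iff.mpr (by linarith : -E₂ ≤ 0)]
    rw [he1]
    have := (one_sub_exp_le_sqrt hE0).trans hEs
    have h0 : 0 ≤ 1 - Real.exp (-E₂) := by nlinarith [Real.exp_le_one_iff.mpr (by linarith : -E₂ ≤ 0)]
    exact mul_le_mul hexpH this h0 (Real.exp_pos _).le
  have h2 : |Real.exp H₁ - 1| ≤ Real.exp BH * s2 := by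
    have := abs_exp_sub_one_le' H₁
    have hm : |H₁| * Real.exp |H₁| ≤ s2 * Real.exp BH :=
      mul_le_mul hHs (Real.exp_le_exp.mpr hH) (Real.exp_pos _).le (le_trans (abs_nonneg _) hHs)
    calc |Real.exp H₁ - 1| ≤ |H₁| * Real.exp |H₁| := this
    _ ≤ s2 * Real.exp BH := hm
    _ = Real.exp BH * s2 := by ring
  calc |Real.exp (H₁ - E₂) - 1| ≤ |Real.exp H₁ * (Real.exp (-E₂) - 1)| + |Real.exp H₁ - 1| := by
        rw [hsplit]; exact abs_add_le _ _
  _ ≤ Real.exp BH * (s1 + s2) := by linarith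

lemma sqrtm_exp {m : ℝ} (hm : 0 ≤ m) : Real.sqrt m * Real.exp (-(m/8)) ≤ 9 := by
  have h1 : Real.sqrt m ≤ 1 + m := by
    rcases le_or_gt m 1 with h | h
    · have : Real.sqrt m ≤ 1 := by
        rw [show (1:ℝ) = Real.sqrt 1 by simp]; exact Real.sqrt_le_sqrt h
      linarith
    · have : Real.sqrt m ≤ m := by
        nlinarith [Real.sq_sqrt hm, Real.sqrt_nonneg m, Real.sqrt_le_sqrt h.le]
      linarith
  have h2 : Real.exp (-(m/8)) ≤ 1 := Real.exp_le_one_iff.mpr (by linarith)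
  have h3 : m * Real.exp (-(m/8)) ≤ 8 := by
    have := Real.add_one_le_exp (m/8)
    have hpos : 0 < Real.exp (m/8) := Real.exp_pos _
    have hinv : Real.exp (-(m/8)) = (Real.exp (m/8))⁻¹ := Real.exp_neg _
    rw [hinv]
    rw [mul_inv_le_iff₀ hpos]
    nlinarith
  nlinarith [Real.exp_pos (-(m/8)), Real.sqrt_nonneg m,
    mul_le_mul_of_nonneg_right h1 (Real.exp_pos (-(m/8))).le]
end scalars4

section assembly
variable {σ w r ny X t m : ℝ}

lemma pow_id1 (n : ℕ) (hn : 1 ≤ n) (hσ : 0 < σ) (ht : t = σ^2) (hr : r = σ*w) :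
    r^(n-1) * t * (σ^n)⁻¹ = σ * w^(n-1) := by
  have h1 : σ^(n-1)*σ^2 = σ^n * σ := by
    rw [← pow_add, ← pow_succ]; congr 1; omega
  have hne : (σ:ℝ)^n ≠ 0 := by positivity
  calc r^(n-1)*t*(σ^n)⁻¹ = (σ^(n-1)*σ^2)*w^(n-1)*(σ^n)⁻¹ := by rw [hr, mul_pow, ht]; ring
  _ = (σ^n*σ)*w^(n-1)*(σ^n)⁻¹ := by rw [h1]
  _ = σ*w^(n-1) := by field_simp

lemma pow_id2 (n : ℕ) (hn : 1 ≤ n) (hσ : 0 < σ) (hr : r = σ*w) :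
    r^(n-1) * σ * (σ^n)⁻¹ = w^(n-1) := by
  have h1 : σ^(n-1)*σ = σ^n := by rw [← pow_succ]; congr 1; omega
  have hne : (σ:ℝ)^n ≠ 0 := by positivity
  calc r^(n-1)*σ*(σ^n)⁻¹ = (σ^(n-1)*σ)*w^(n-1)*(σ^n)⁻¹ := by rw [hr, mul_pow]; ring
  _ = σ^n*w^(n-1)*(σ^n)⁻¹ := by rw [h1]
  _ = w^(n-1) := by field_simp

lemma piece1_assembly (n : ℕ) (hn : 1 ≤ n)
    (hσ : 0 < σ) (hσ1 : σ ≤ 1) (ht : t = σ^2) (hrs : r = σ*w) (hw0 : 0 ≤ w)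
    (hr0 : 0 ≤ r) (hr1 : r ≤ 1) (hny0 : 0 ≤ ny) (hnyX : ny ≤ 1+X) (hX0 : 0 ≤ X)
    (hm : m = t*ny^2) :
    σ*w^(n-1)*(Real.exp (-(w^2/2)) * (Real.exp (-(m/8)) *
        (3*(n:ℝ) + 6*(r*ny/t) + 4*ny^2 + 4*(r^2/t))))
      ≤ ((3*(n:ℝ)+36)*Cg (n-1) + 10*Cg n) * (1+X) := by
  set e1 := Real.exp (-(w^2/2)) with he1
  set e3 := Real.exp (-(m/8)) with he3
  have he10 : 0 < e1 := Real.exp_pos _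
  have he30 : 0 < e3 := Real.exp_pos _
  have he11 : e1 ≤ 1 := Real.exp_le_one_iff.mpr (neg_nonpos.mpr (by positivity))
  have hm0 : 0 ≤ m := by rw [hm, ht]; positivity
  have he31 : e3 ≤ 1 := Real.exp_le_one_iff.mpr (by linarith [neg_nonpos.mpr (by linarith [hm0] : (0:ℝ) ≤ m/8)])
  have hy1 : w^(n-1)*e1 ≤ Cg (n-1) := poly_gauss' (n-1) hw0
  have hy2 : w^n*e1 ≤ Cg n := poly_gauss' n hw0
  have hy10 : 0 ≤ w^(n-1)*e1 := by positivity
  have hy20 : 0 ≤ w^n*e1 := by positivity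
  have hc1 : 0 < Cg (n-1) := Cg_pos _
  have hc2 : 0 < Cg n := Cg_pos _
  have hσne : σ ≠ 0 := ne_of_gt hσ
  have hwn : w^n = w^(n-1)*w := by rw [← pow_succ]; congr 1; omega
  have hsm : Real.sqrt m = σ*ny := by
    rw [hm, ht, show σ^2*ny^2 = (σ*ny)^2 by ring, Real.sqrt_sq (by positivity)]
  have hsme : (σ*ny)*e3 ≤ 9 := by rw [← hsm]; exact sqrtm_exp hm0
  have hsme0 : 0 ≤ (σ*ny)*e3 := by positivity
  -- rewrite LHS
  have hEq : σ*w^(n-1)*(e1*(e3*(3*(n:ℝ) + 6*(r*ny/t) + 4*ny^2 + 4*(r^2/t))))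
      = 3*(n:ℝ)*(σ*((w^(n-1)*e1)*e3)) + 6*(ny*((w^n*e1)*e3))
        + 4*(((σ*ny)*e3)*(ny*(w^(n-1)*e1))) + 4*(r*((w^n*e1)*e3)) := by
    rw [hwn, hrs, ht]
    field_simp
  rw [hEq]
  have A1 : 3*(n:ℝ)*(σ*((w^(n-1)*e1)*e3)) ≤ 3*(n:ℝ)*Cg (n-1) := by
    apply mul_le_mul_of_nonneg_left _ (by positivity)
    calc σ*((w^(n-1)*e1)*e3) ≤ 1*((w^(n-1)*e1)*1) := by
          apply mul_le_mul hσ1 (mul_le_mul le_rfl he31 he30.le hy10) (by positivity) zero_le_one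
    _ = w^(n-1)*e1 := by ring
    _ ≤ Cg (n-1) := hy1
  have A2 : 6*(ny*((w^n*e1)*e3)) ≤ 6*((1+X)*Cg n) := by
    apply mul_le_mul_of_nonneg_left _ (by norm_num)
    apply mul_le_mul hnyX _ (by positivity) (by positivity)
    calc (w^n*e1)*e3 ≤ (w^n*e1)*1 := by
          apply mul_le_mul_of_nonneg_left he31 hy20
    _ = w^n*e1 := by ring
    _ ≤ Cg n := hy2
  have A3 : 4*(((σ*ny)*e3)*(ny*(w^(n-1)*e1))) ≤ 4*(9*((1+X)*Cg (n-1))) := by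
    apply mul_le_mul_of_nonneg_left _ (by norm_num)
    apply mul_le_mul hsme _ (by positivity) (by norm_num)
    exact mul_le_mul hnyX hy1 hy10 (by positivity)
  have A4 : 4*(r*((w^n*e1)*e3)) ≤ 4*Cg n := by
    apply mul_le_mul_of_nonneg_left _ (by norm_num)
    calc r*((w^n*e1)*e3) ≤ 1*((w^n*e1)*1) := by
          apply mul_le_mul hr1 (mul_le_mul le_rfl he31 he30.le hy20) (by positivity) zero_le_one
    _ = w^n*e1 := by ring
    _ ≤ Cg n := hy2
  have hfin : 3*(n:ℝ)*Cg (n-1) + 6*((1+X)*Cg n) + 4*(9*((1+X)*Cg (n-1))) + 4*Cg n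
      ≤ ((3*(n:ℝ)+36)*Cg (n-1) + 10*Cg n) * (1+X) := by
    have h1 : (0:ℝ) ≤ 3*(n:ℝ)*Cg (n-1)*X := by positivity
    have h2 : (0:ℝ) ≤ 4*Cg n*X := by positivity
    nlinarith
  linarith

lemma piece2_assembly (n : ℕ) (hn : 1 ≤ n)
    (hw0 : 0 ≤ w) (hny0 : 0 ≤ ny) (hnyX : ny ≤ 1+X) (hX0 : 0 ≤ X) :
    w^(n-1)*(Real.exp (-(w^2/2)) *
        ((ny + (3*(n:ℝ) + 2*w + 2*(w*ny)))*((n:ℝ)/2 + w^2/2)))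
      ≤ ((3*(n:ℝ)+1)*((n:ℝ)/2)*Cg (n-1) + ((3*(n:ℝ)+1)/2)*Cg (n+1)
          + 2*(n:ℝ)*Cg n + 2*Cg (n+2)) * (1+X) := by
  set e1 := Real.exp (-(w^2/2)) with he1
  have he10 : 0 < e1 := Real.exp_pos _
  have hyk : ∀ k : ℕ, w^k*e1 ≤ Cg k := fun k => poly_gauss' k hw0
  have hyk0 : ∀ k : ℕ, 0 ≤ w^k*e1 := fun k => by positivity
  have hSB : ny + (3*(n:ℝ) + 2*w + 2*(w*ny)) ≤ ((3*(n:ℝ)+1) + 4*w)*(1+X) := by nlinarith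
  have hQ0 : (0:ℝ) ≤ (n:ℝ)/2 + w^2/2 := by positivity
  have step1 : w^(n-1)*(e1*((ny + (3*(n:ℝ) + 2*w + 2*(w*ny)))*((n:ℝ)/2 + w^2/2)))
      ≤ (1+X) * (w^(n-1)*(e1*((((3*(n:ℝ)+1) + 4*w))*((n:ℝ)/2 + w^2/2)))) := by
    have hmono : (ny + (3*(n:ℝ) + 2*w + 2*(w*ny)))*((n:ℝ)/2 + w^2/2)
        ≤ (((3*(n:ℝ)+1) + 4*w)*(1+X))*((n:ℝ)/2 + w^2/2) :=
      mul_le_mul_of_nonneg_right hSB hQ0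
    calc w^(n-1)*(e1*((ny + (3*(n:ℝ) + 2*w + 2*(w*ny)))*((n:ℝ)/2 + w^2/2)))
        ≤ w^(n-1)*(e1*((((3*(n:ℝ)+1) + 4*w)*(1+X))*((n:ℝ)/2 + w^2/2))) := by
          apply mul_le_mul_of_nonneg_left (mul_le_mul_of_nonneg_left hmono he10.le) (by positivity)
    _ = (1+X) * (w^(n-1)*(e1*((((3*(n:ℝ)+1) + 4*w))*((n:ℝ)/2 + w^2/2)))) := by ring
  have hw1 : w^(n-1)*w = w^n := by rw [← pow_succ]; congr 1; omega
  have hw2 : w^(n-1)*w^2 = w^(n+1) := by rw [← pow_add]; congr 1; omega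
  have hw3 : w^(n-1)*w^3 = w^(n+2) := by rw [← pow_add]; congr 1; omega
  have hexpand : w^(n-1)*(e1*((((3*(n:ℝ)+1) + 4*w))*((n:ℝ)/2 + w^2/2)))
      = (3*(n:ℝ)+1)*((n:ℝ)/2)*(w^(n-1)*e1) + ((3*(n:ℝ)+1)/2)*((w^(n-1)*w^2)*e1)
        + 2*(n:ℝ)*((w^(n-1)*w)*e1) + 2*((w^(n-1)*w^3)*e1) := by ring
  have step2 : w^(n-1)*(e1*((((3*(n:ℝ)+1) + 4*w))*((n:ℝ)/2 + w^2/2)))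
      ≤ (3*(n:ℝ)+1)*((n:ℝ)/2)*Cg (n-1) + ((3*(n:ℝ)+1)/2)*Cg (n+1)
        + 2*(n:ℝ)*Cg n + 2*Cg (n+2) := by
    rw [hexpand, hw1, hw2, hw3]
    have b1 := mul_le_mul_of_nonneg_left (hyk (n-1)) (by positivity : (0:ℝ) ≤ (3*(n:ℝ)+1)*((n:ℝ)/2))
    have b2 := mul_le_mul_of_nonneg_left (hyk (n+1)) (by positivity : (0:ℝ) ≤ (3*(n:ℝ)+1)/2)
    have b3 := mul_le_mul_of_nonneg_left (hyk n) (by positivity : (0:ℝ) ≤ 2*(n:ℝ))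
    have b4 := mul_le_mul_of_nonneg_left (hyk (n+2)) (by norm_num : (0:ℝ) ≤ 2)
    linarith [b1, b2, b3, b4]
  calc w^(n-1)*(e1*((ny + (3*(n:ℝ) + 2*w + 2*(w*ny)))*((n:ℝ)/2 + w^2/2)))
      ≤ (1+X) * (w^(n-1)*(e1*((((3*(n:ℝ)+1) + 4*w))*((n:ℝ)/2 + w^2/2)))) := step1
  _ ≤ (1+X) * ((3*(n:ℝ)+1)*((n:ℝ)/2)*Cg (n-1) + ((3*(n:ℝ)+1)/2)*Cg (n+1)
        + 2*(n:ℝ)*Cg n + 2*Cg (n+2)) := by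
      apply mul_le_mul_of_nonneg_left step2 (by positivity)
  _ = ((3*(n:ℝ)+1)*((n:ℝ)/2)*Cg (n-1) + ((3*(n:ℝ)+1)/2)*Cg (n+1)
        + 2*(n:ℝ)*Cg n + 2*Cg (n+2)) * (1+X) := by ring
end assembly


-- ===== axioms standing for already-proven lemmas (merge later) =====
-- ===== end axioms =====

noncomputable def Csmall (n : ℕ) : ℝ := Real.exp ((n:ℝ)+6) *
  ( ((3*(n:ℝ)+36) + (3*(n:ℝ)+1)*((n:ℝ)/2)) * Cg (n-1) + (10 + 2*(n:ℝ)) * Cg n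
    + ((3*(n:ℝ)+1)/2) * Cg (n+1) + 2 * Cg (n+2) )

set_option maxHeartbeats 2000000 in
theorem small_t (n : ℕ) (hn : 1 ≤ n) (x y : EuclideanSpace ℝ (Fin n))
    (hr1' : ‖x - y‖ ≤ 1) (hrx : ‖x - y‖ * ‖x‖ ≤ 1) {t : ℝ} (ht : 0 < t) (ht4 : t ≤ 1/4) :
    ‖x - y‖ ^ (n-1) *
      (t * |deriv (fun s => heatKerA n s x y) t - deriv (fun s => heatKerW n s (x - y)) t|)
      ≤ Csmall n * (1 + ‖x‖) := by
  rw [derivA x y ht, derivW (x - y) ht]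
  set z := x - y with hz
  set r := ‖z‖ with hrdef
  set ny := ‖y‖ with hny
  set X := ‖x‖ with hX
  set b := Real.exp (-t) with hbdef
  set g := 1 - Real.exp (-2*t) with hgdef
  set e2 := Real.exp (-2*t) with he2def
  set u := x - Real.exp (-t) • y with hu
  set ip : ℝ := (inner ℝ z y) with hip
  set σ := Real.sqrt t with hσdef
  set w := r / σ with hwdef
  set m := t * ny^2 with hmdef
  have hσ : 0 < σ := Real.sqrt_pos.mpr ht
  have hσ2 : σ^2 = t := Real.sq_sqrt ht.le
  have hσ1 : σ ≤ 1 := by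
    rw [hσdef, show (1:ℝ) = Real.sqrt 1 by simp]
    exact Real.sqrt_le_sqrt (by linarith)
  have htσ : t ≤ σ := by nlinarith
  have hr0 : 0 ≤ r := norm_nonneg _
  have hr1 : r ≤ 1 := hr1'
  have hny0 : 0 ≤ ny := norm_nonneg _
  have hX0 : 0 ≤ X := norm_nonneg _
  have hw0 : 0 ≤ w := by positivity
  have hrσw : r = σ * w := by rw [hwdef, mul_div_cancel₀ _ hσ.ne']
  have hw2 : w^2/2 = r^2/(2*t) := by rw [hwdef, div_pow, hσ2]; ring
  have hgpos : 0 < g := lt_of_lt_of_le ht (g_ge ht ht4)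
  have hgt : t ≤ g := g_ge ht ht4
  have hg2t : g ≤ 2*t := g_le ht
  have hbpos : 0 < b := Real.exp_pos _
  have hb1 : b ≤ 1 := Real.exp_le_one_iff.mpr (by linarith)
  have h1bl : t/2 ≤ 1 - b := b_ge ht ht4
  have h1bu : 1 - b ≤ t := b_le ht
  have he2b : e2 = b^2 := by rw [he2def, hbdef, sq, ← Real.exp_add]; ring_nf
  have he2pos : 0 < e2 := Real.exp_pos _
  have he21 : e2 ≤ 1 := Real.exp_le_one_iff.mpr (by linarith)
  have husm : u = z + (1-b) • y := by
    rw [hu, hz, hbdef, sub_smul, one_smul]; abel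
  have hq_expand : ‖u‖^2 = r^2 + 2*(1-b)*ip + (1-b)^2*ny^2 := by
    rw [husm, norm_add_smul_sq]
  have hipb : |ip| ≤ r * ny := abs_real_inner_le_norm z y
  have hyx : ny ≤ 1 + X := by
    have hyz : y = x - z := by rw [hz]; abel
    rw [hny, hyz]
    calc ‖x - z‖ ≤ ‖x‖ + ‖z‖ := norm_sub_le x z
    _ ≤ 1 + X := by rw [← hX, ← hrdef]; linarith
  have hry : r * ny ≤ 2 := by nlinarith
  have huy : (inner ℝ u y) = ip + (1-b)*ny^2 := by
    rw [husm, inner_add_left, real_inner_smul_left, real_inner_self_eq_norm_sq, ← hny, ← hip]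
  set E₁ : ℝ := r^2*(2*t-g)/(2*t*g) + 2*(1-b)*ip/g with hE1def
  set E₂ : ℝ := (1-b)^2*ny^2/g with hE2def
  set H₁ : ℝ := -(n:ℝ)*t + (-(n:ℝ)/2)*Real.log (g/(2*t)) - E₁ with hH1def
  set A := heatKerA n t x y with hA
  set W := heatKerW n t z with hW
  have hWpos : 0 < W := by
    rw [hW, heatKerW]
    have h2pi : (0:ℝ) < 2*Real.pi*t := by positivity
    positivity
  have hfactor : A = W * Real.exp (H₁ - E₂) := by
    have h := kerA_factor n x y ht
    rw [← hz, ← hW, ← hA, ← hgdef, ← hbdef, ← hu] at h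
    rw [h]
    have hRpos : (0:ℝ) < g/(2*t) := by positivity
    rw [Real.rpow_def_of_pos hRpos, ← Real.exp_add, ← Real.exp_add]
    congr 1
    have hEsplit : ‖u‖^2/g - r^2/(2*t) = E₁ + E₂ := by
      rw [hq_expand, hE1def, hE2def]
      field_simp
      ring
    rw [hEsplit, hH1def]
    ring
  have hApos : 0 < A := by rw [hfactor]; positivity
  -- scalar bounds
  have hlogR : |Real.log (g/(2*t))| ≤ 4*t := bd_logR ht hgt hg2t (g_ge2 ht ht4)
  have hE1b : |E₁| ≤ 2*r^2 + 2*(r*ny) := by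
    rw [hE1def]
    exact bd_E1 ht hgt hg2t (g_ge2 ht ht4) h1bu (by linarith) hipb hr0 hny0
  have hH1a : |H₁| ≤ (n:ℝ) + 6 := by
    rw [hH1def]; exact bd_H1a n ht ht4 hlogR hE1b hr1 hr0 hry
  have hH1s : |H₁| ≤ σ*((3*(n:ℝ)) + 2*w + 2*(w*ny)) := by
    rw [hH1def]; exact bd_H1s n ht hσ htσ hσ1 hrσw hw0 hny0 hlogR hE1b hr1 hr0
  have hE2p := bd_E2 ht hgt hg2t h1bl h1bu hny0
  have hE20 : 0 ≤ E₂ := by rw [hE2def]; positivity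
  have hsqrtE2 : Real.sqrt E₂ ≤ σ*ny := by
    have h1 : Real.sqrt E₂ ≤ Real.sqrt m := Real.sqrt_le_sqrt (by rw [hE2def, hmdef]; exact hE2p.2)
    have h2 : Real.sqrt m = σ*ny := by
      rw [hmdef, ← hσ2, show σ^2*ny^2 = (σ*ny)^2 by ring, Real.sqrt_sq (by positivity)]
    linarith
  have hexpdiff : |Real.exp (H₁ - E₂) - 1|
      ≤ Real.exp ((n:ℝ)+6) * (σ*ny + σ*((3*(n:ℝ)) + 2*w + 2*(w*ny))) :=
    bd_expdiff hH1a hH1s hE20 hsqrtE2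
  have hAW : |A - W| ≤ W * (Real.exp ((n:ℝ)+6) * (σ*ny + σ*((3*(n:ℝ)) + 2*w + 2*(w*ny)))) := by
    have hdiff : A - W = W * (Real.exp (H₁ - E₂) - 1) := by rw [hfactor]; ring
    rw [hdiff, abs_mul, abs_of_nonneg hWpos.le]
    exact mul_le_mul_of_nonneg_left hexpdiff hWpos.le
  -- W and A upper bounds
  set e1 := Real.exp (-(w^2/2)) with he1def
  set e3 := Real.exp (-(m/8)) with he3def
  have hW_le : W ≤ (σ^n)⁻¹ * e1 := by
    rw [hW, heatKerW]
    have hexp_eq : Real.exp (-‖z‖^2/(2*t)) = e1 := by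
      rw [he1def]; congr 1
      rw [← hrdef, hw2]; ring
    rw [hexp_eq]
    have hexpo : -(n:ℝ)/2 ≤ 0 := by
      have : (0:ℝ) ≤ (n:ℝ) := Nat.cast_nonneg n
      linarith
    have hbase : t ≤ 2*Real.pi*t := by
      have h1 : (1:ℝ)*t ≤ (2*Real.pi)*t :=
        mul_le_mul_of_nonneg_right (by linarith [Real.pi_gt_three]) ht.le
      linarith
    have hrpow : (2*Real.pi*t) ^ (-(n:ℝ)/2) ≤ t ^ (-(n:ℝ)/2) :=
      Real.rpow_le_rpow_of_nonpos ht hbase hexpo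
    have hts : t ^ (-(n:ℝ)/2) = (σ^n)⁻¹ := by
      have h1 : σ^n = t^((n:ℝ)/2) := by
        rw [hσdef, Real.sqrt_eq_rpow, ← Real.rpow_natCast (t ^ ((1:ℝ)/2)) n,
          ← Real.rpow_mul ht.le, show (1:ℝ)/2*(n:ℝ) = (n:ℝ)/2 by ring]
      rw [h1, show -(n:ℝ)/2 = -((n:ℝ)/2) by ring, Real.rpow_neg ht.le]
    rw [← hts]
    exact mul_le_mul_of_nonneg_right hrpow (Real.exp_pos _).le
  have hA_le : A ≤ Real.exp ((n:ℝ)+6) * ((σ^n)⁻¹ * (e1 * e3)) := by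
    rw [hfactor, Real.exp_sub]
    have hh1 : Real.exp H₁ ≤ Real.exp ((n:ℝ)+6) :=
      Real.exp_le_exp.mpr (le_trans (le_abs_self _) hH1a)
    have hh2 : Real.exp (-E₂) ≤ e3 := by
      rw [he3def]
      apply Real.exp_le_exp.mpr
      have := hE2p.1
      rw [← hE2def, ← hmdef] at this
      linarith
    have hh2' : Real.exp H₁ / Real.exp E₂ = Real.exp H₁ * Real.exp (-E₂) := by
      rw [Real.exp_neg]; ring
    rw [hh2']
    calc W * (Real.exp H₁ * Real.exp (-E₂)) ≤ ((σ^n)⁻¹ * e1) * (Real.exp ((n:ℝ)+6) * e3) := by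
          apply mul_le_mul hW_le _ (by positivity) (by positivity)
          exact mul_le_mul hh1 hh2 (Real.exp_pos _).le (Real.exp_pos _).le
    _ = Real.exp ((n:ℝ)+6) * ((σ^n)⁻¹ * (e1 * e3)) := by ring
  -- name the P and Q expressions
  set PE : ℝ := -(n:ℝ) - (n:ℝ)*e2/g - 2*b*((inner ℝ u y))/g + 2*e2*‖u‖^2/g^2 with hPEdef
  set QE : ℝ := -(n:ℝ)/(2*t) + r^2/(2*t^2) with hQEdef
  have hPQ : |PE - QE| ≤ 3*(n:ℝ) + 6*(r*ny/t) + 4*ny^2 + 4*(r^2/t) := by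
    rw [hPEdef, hQEdef]
    apply bd_PQ n ht hgt hg2t he2b he2pos.le he21 hbpos.le hb1 h1bu (by linarith) hipb hr0 hny0
    · have := gA ht ht4; rw [← hgdef, ← he2def] at this; exact this
    · have := gB ht ht4; rw [← hgdef, ← hbdef] at this; exact this
    · exact hq_expand
    · exact huy
  have htQ : t*|QE| ≤ (n:ℝ)/2 + w^2/2 := by rw [hQEdef]; exact bd_tQ n ht hw2 hr0
  -- split the difference
  have habs : |A*PE - W*QE| ≤ A*|PE-QE| + |A-W| * |QE| := by
    have hsplit : A*PE - W*QE = A*(PE-QE) + (A-W)*QE := by ring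
    calc |A*PE - W*QE| = |A*(PE-QE) + (A-W)*QE| := by rw [hsplit]
    _ ≤ |A*(PE-QE)| + |(A-W)*QE| := abs_add_le _ _
    _ = A*|PE-QE| + |A-W| * |QE| := by rw [abs_mul, abs_mul, abs_of_nonneg hApos.le]
  have step0 : r^(n-1) * (t * |A*PE - W*QE|)
      ≤ r^(n-1)*(t*(A*|PE-QE|)) + r^(n-1)*((|A-W|)*(t*|QE|)) := by
    calc r^(n-1) * (t * |A*PE - W*QE|)
        ≤ r^(n-1) * (t * (A*|PE-QE| + |A-W| * |QE|)) := by
          apply mul_le_mul_of_nonneg_left (mul_le_mul_of_nonneg_left habs ht.le) (by positivity)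
    _ = r^(n-1)*(t*(A*|PE-QE|)) + r^(n-1)*((|A-W|)*(t*|QE|)) := by ring
  have hK1 : (0:ℝ) < Real.exp ((n:ℝ)+6) := Real.exp_pos _
  -- piece 1
  have hPiece1 : r^(n-1)*(t*(A*|PE-QE|))
      ≤ Real.exp ((n:ℝ)+6) * (((3*(n:ℝ)+36)*Cg (n-1) + 10*Cg n) * (1+X)) := by
    have stepa : r^(n-1)*(t*(A*|PE-QE|))
        ≤ r^(n-1)*(t*((Real.exp ((n:ℝ)+6) * ((σ^n)⁻¹ * (e1 * e3)))
            *(3*(n:ℝ) + 6*(r*ny/t) + 4*ny^2 + 4*(r^2/t)))) := by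
      apply mul_le_mul_of_nonneg_left _ (by positivity)
      apply mul_le_mul_of_nonneg_left _ ht.le
      exact mul_le_mul hA_le hPQ (abs_nonneg _) (by positivity)
    have stepb : r^(n-1)*(t*((Real.exp ((n:ℝ)+6) * ((σ^n)⁻¹ * (e1 * e3)))
            *(3*(n:ℝ) + 6*(r*ny/t) + 4*ny^2 + 4*(r^2/t))))
        = Real.exp ((n:ℝ)+6) * (σ*w^(n-1)*(e1 * (e3 *
            (3*(n:ℝ) + 6*(r*ny/t) + 4*ny^2 + 4*(r^2/t))))) := by
      have hpid := pow_id1 n hn hσ hσ2.symm hrσw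
      calc r^(n-1)*(t*((Real.exp ((n:ℝ)+6) * ((σ^n)⁻¹ * (e1 * e3)))
            *(3*(n:ℝ) + 6*(r*ny/t) + 4*ny^2 + 4*(r^2/t))))
          = Real.exp ((n:ℝ)+6) * ((r^(n-1)*t*(σ^n)⁻¹)*(e1 * (e3 *
            (3*(n:ℝ) + 6*(r*ny/t) + 4*ny^2 + 4*(r^2/t))))) := by ring
      _ = Real.exp ((n:ℝ)+6) * (σ*w^(n-1)*(e1 * (e3 *
            (3*(n:ℝ) + 6*(r*ny/t) + 4*ny^2 + 4*(r^2/t))))) := by rw [hpid]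
    rw [stepb] at stepa
    refine stepa.trans ?_
    apply mul_le_mul_of_nonneg_left _ hK1.le
    rw [he1def, he3def]
    exact piece1_assembly n hn hσ hσ1 hσ2.symm hrσw hw0 hr0 hr1 hny0 hyx hX0 hmdef
  -- piece 2
  have hPiece2 : r^(n-1)*((|A-W|)*(t*|QE|))
      ≤ Real.exp ((n:ℝ)+6) * (((3*(n:ℝ)+1)*((n:ℝ)/2)*Cg (n-1) + ((3*(n:ℝ)+1)/2)*Cg (n+1)
          + 2*(n:ℝ)*Cg n + 2*Cg (n+2)) * (1+X)) := by
    have stepa : r^(n-1)*((|A-W|)*(t*|QE|))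
        ≤ r^(n-1)*(((((σ^n)⁻¹ * e1) * (Real.exp ((n:ℝ)+6) * (σ*ny + σ*((3*(n:ℝ)) + 2*w + 2*(w*ny)))))
            *((n:ℝ)/2 + w^2/2))) := by
      apply mul_le_mul_of_nonneg_left _ (by positivity)
      apply mul_le_mul _ htQ (by positivity) (by positivity)
      refine hAW.trans ?_
      exact mul_le_mul_of_nonneg_right hW_le (by positivity)
    have stepb : r^(n-1)*(((((σ^n)⁻¹ * e1) * (Real.exp ((n:ℝ)+6) * (σ*ny + σ*((3*(n:ℝ)) + 2*w + 2*(w*ny)))))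
            *((n:ℝ)/2 + w^2/2)))
        = Real.exp ((n:ℝ)+6) * (w^(n-1)*(e1 *
            ((ny + (3*(n:ℝ) + 2*w + 2*(w*ny)))*((n:ℝ)/2 + w^2/2)))) := by
      have hpid := pow_id2 n hn hσ hrσw
      calc r^(n-1)*(((((σ^n)⁻¹ * e1) * (Real.exp ((n:ℝ)+6) * (σ*ny + σ*((3*(n:ℝ)) + 2*w + 2*(w*ny)))))
            *((n:ℝ)/2 + w^2/2)))
          = Real.exp ((n:ℝ)+6) * ((r^(n-1)*σ*(σ^n)⁻¹)*(e1 *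
            ((ny + (3*(n:ℝ) + 2*w + 2*(w*ny)))*((n:ℝ)/2 + w^2/2)))) := by ring
      _ = Real.exp ((n:ℝ)+6) * (w^(n-1)*(e1 *
            ((ny + (3*(n:ℝ) + 2*w + 2*(w*ny)))*((n:ℝ)/2 + w^2/2)))) := by rw [hpid]
    rw [stepb] at stepa
    refine stepa.trans ?_
    apply mul_le_mul_of_nonneg_left _ hK1.le
    rw [he1def]
    exact piece2_assembly n hn hw0 hny0 hyx hX0
  have hCs : Csmall n * (1+X)
      = Real.exp ((n:ℝ)+6) * (((3*(n:ℝ)+36)*Cg (n-1) + 10*Cg n) * (1+X))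
        + Real.exp ((n:ℝ)+6) * (((3*(n:ℝ)+1)*((n:ℝ)/2)*Cg (n-1) + ((3*(n:ℝ)+1)/2)*Cg (n+1)
          + 2*(n:ℝ)*Cg n + 2*Cg (n+2)) * (1+X)) := by
    rw [Csmall]; ring
  rw [hCs]
  exact step0.trans (add_le_add hPiece1 hPiece2)


lemma exp_half_le : Real.exp (-(1/2 : ℝ)) ≤ 2/3 := by
  have h := Real.add_one_le_exp (1/2 : ℝ)
  have hpos : (0:ℝ) < Real.exp (1/2) := Real.exp_pos _
  rw [Real.exp_neg]
  rw [inv_le_comm₀ hpos (by norm_num)]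
  linarith

lemma bd_tQ2 {t r : ℝ} (n : ℕ) (ht4 : (1:ℝ)/4 ≤ t) (hr0 : 0 ≤ r) (hr1 : r ≤ 1) :
    t*|(-(n:ℝ)/(2*t) + r^2/(2*t^2))| ≤ (n:ℝ)/2 + 2 := by
  have ht : 0 < t := by linarith
  have h1 : |(-(n:ℝ)/(2*t) + r^2/(2*t^2))| ≤ (n:ℝ)/(2*t) + r^2/(2*t^2) := by
    calc |(-(n:ℝ)/(2*t) + r^2/(2*t^2))| ≤ |(-(n:ℝ)/(2*t))| + |r^2/(2*t^2)| := abs_add_le _ _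
    _ = (n:ℝ)/(2*t) + r^2/(2*t^2) := by
        rw [abs_div, abs_div, abs_neg, abs_of_nonneg (Nat.cast_nonneg n : (0:ℝ) ≤ n),
          abs_of_nonneg (by positivity : (0:ℝ) ≤ 2*t), abs_of_nonneg (by positivity : (0:ℝ) ≤ r^2),
          abs_of_nonneg (by positivity : (0:ℝ) ≤ 2*t^2)]
  have h2 : t*((n:ℝ)/(2*t) + r^2/(2*t^2)) = (n:ℝ)/2 + r^2/(2*t) := by field_simp
  have h3 : r^2/(2*t) ≤ 2 := by
    rw [div_le_iff₀ (by positivity)]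
    nlinarith
  calc t*|(-(n:ℝ)/(2*t) + r^2/(2*t^2))| ≤ t*((n:ℝ)/(2*t) + r^2/(2*t^2)) :=
        mul_le_mul_of_nonneg_left h1 ht.le
  _ = (n:ℝ)/2 + r^2/(2*t) := h2
  _ ≤ (n:ℝ)/2 + 2 := by linarith

lemma bd_P_large {g b e2 v ny uy : ℝ} (n : ℕ) (hg13 : 1/3 ≤ g) (hg1 : g ≤ 1)
    (he20 : 0 ≤ e2) (he21 : e2 ≤ 1) (hb0 : 0 ≤ b) (hb1 : b ≤ 1)
    (huy : |uy| ≤ v*ny) (hv : 0 ≤ v) (hny0 : 0 ≤ ny) :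
    |(-(n:ℝ) - (n:ℝ)*e2/g - 2*b*uy/g + 2*e2*v^2/g^2)| ≤ 4*(n:ℝ) + 6*(v*ny) + 18*v^2 := by
  have hgpos : (0:ℝ) < g := by linarith
  have t1 : |(-(n:ℝ))| = (n:ℝ) := by simp
  have t2 : |(n:ℝ)*e2/g| ≤ 3*(n:ℝ) := by
    rw [abs_div, abs_mul, abs_of_nonneg (Nat.cast_nonneg n : (0:ℝ) ≤ n), abs_of_nonneg he20,
      abs_of_nonneg hgpos.le, div_le_iff₀ hgpos]
    nlinarith [Nat.cast_nonneg n (α := ℝ)]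
  have t3 : |2*b*uy/g| ≤ 6*(v*ny) := by
    rw [abs_div, abs_mul, abs_mul, abs_of_nonneg (by norm_num : (0:ℝ) ≤ 2),
      abs_of_nonneg hb0, abs_of_nonneg hgpos.le, div_le_iff₀ hgpos]
    have h1 : b*|uy| ≤ 1*|uy| := mul_le_mul_of_nonneg_right hb1 (abs_nonneg uy)
    have h3 : (v*ny)*(1/3) ≤ (v*ny)*g := mul_le_mul_of_nonneg_left hg13 (mul_nonneg hv hny0)
    nlinarith [abs_nonneg uy]
  have t4 : |2*e2*v^2/g^2| ≤ 18*v^2 := by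
    rw [abs_div, abs_mul, abs_mul, abs_of_nonneg (by norm_num : (0:ℝ) ≤ 2),
      abs_of_nonneg he20, abs_of_nonneg (by positivity : (0:ℝ) ≤ v^2),
      abs_of_nonneg (by positivity : (0:ℝ) ≤ g^2), div_le_iff₀ (by positivity)]
    have hg9 : (1:ℝ)/9 ≤ g*g := by nlinarith
    have h4 : v^2*(1/9) ≤ v^2*(g*g) := mul_le_mul_of_nonneg_left hg9 (sq_nonneg v)
    have h5 : e2*v^2 ≤ 1*v^2 := mul_le_mul_of_nonneg_right he21 (sq_nonneg v)
    nlinarith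
  calc |(-(n:ℝ) - (n:ℝ)*e2/g - 2*b*uy/g + 2*e2*v^2/g^2)|
      ≤ |(-(n:ℝ) - (n:ℝ)*e2/g - 2*b*uy/g)| + |2*e2*v^2/g^2| := abs_add_le _ _
  _ ≤ |(-(n:ℝ) - (n:ℝ)*e2/g)| + |2*b*uy/g| + |2*e2*v^2/g^2| := by
      linarith [abs_sub (-(n:ℝ) - (n:ℝ)*e2/g) (2*b*uy/g)]
  _ ≤ |(-(n:ℝ))| + |(n:ℝ)*e2/g| + |2*b*uy/g| + |2*e2*v^2/g^2| := by
      linarith [abs_sub (-(n:ℝ)) ((n:ℝ)*e2/g)]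
  _ ≤ 4*(n:ℝ) + 6*(v*ny) + 18*v^2 := by rw [t1]; linarith

lemma large_core {t v ny X : ℝ} (n : ℕ) (hn : 1 ≤ n) (ht4 : (1:ℝ)/4 ≤ t) (hv : 0 ≤ v)
    (hny0 : 0 ≤ ny) (hnyX : ny ≤ 1+X) (hX0 : 0 ≤ X) :
    (t*Real.exp (-(n:ℝ)*t)) * (Real.exp (-v^2) * (4*(n:ℝ) + 6*(v*ny) + 18*v^2))
      ≤ (4*(n:ℝ)+24)*(1+X) := by
  have ht : 0 < t := by linarith
  have h1 : t*Real.exp (-(n:ℝ)*t) ≤ 1 := by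
    have hnt : -(n:ℝ)*t ≤ -t := by
      have : (1:ℝ) ≤ (n:ℝ) := by exact_mod_cast hn
      nlinarith
    have h2 : Real.exp (-(n:ℝ)*t) ≤ Real.exp (-t) := Real.exp_le_exp.mpr hnt
    have h3 : t * Real.exp (-t) ≤ 1 := by
      have := Real.add_one_le_exp t
      have hpos : (0:ℝ) < Real.exp t := Real.exp_pos _
      have hinv : Real.exp (-t) = (Real.exp t)⁻¹ := Real.exp_neg _
      rw [hinv, mul_inv_le_iff₀ hpos]
      linarith
    nlinarith [Real.exp_pos (-(n:ℝ)*t)]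
  have hE : 0 < Real.exp (-v^2) := Real.exp_pos _
  have hE1 : Real.exp (-v^2) ≤ 1 := Real.exp_le_one_iff.mpr (by nlinarith [sq_nonneg v])
  have hv2 : v^2*Real.exp (-v^2) ≤ 1 := by
    have h := Real.add_one_le_exp (v^2)
    have hpos : (0:ℝ) < Real.exp (v^2) := Real.exp_pos _
    have hinv : Real.exp (-v^2) = (Real.exp (v^2))⁻¹ := Real.exp_neg _
    rw [hinv, mul_inv_le_iff₀ hpos]
    nlinarith [sq_nonneg v]
  have hv1 : v*Real.exp (-v^2) ≤ 1 := by
    rcases le_or_gt v 1 with h | h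
    · nlinarith
    · have : v ≤ v^2 := by nlinarith
      nlinarith
  have hrest : Real.exp (-v^2) * (4*(n:ℝ) + 6*(v*ny) + 18*v^2) ≤ (4*(n:ℝ)+24)*(1+X) := by
    have hd : Real.exp (-v^2) * (4*(n:ℝ) + 6*(v*ny) + 18*v^2)
        = 4*(n:ℝ)*Real.exp (-v^2) + 6*ny*(v*Real.exp (-v^2)) + 18*(v^2*Real.exp (-v^2)) := by
      ring
    rw [hd]
    have b1 : 4*(n:ℝ)*Real.exp (-v^2) ≤ 4*(n:ℝ) := by
      nlinarith [Nat.cast_nonneg n (α := ℝ)]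
    have b2 : 6*ny*(v*Real.exp (-v^2)) ≤ 6*(1+X) := by
      have := mul_le_mul hnyX hv1 (by positivity) (by linarith)
      nlinarith
    have b3 : 18*(v^2*Real.exp (-v^2)) ≤ 18 := by linarith
    nlinarith [Nat.cast_nonneg n (α := ℝ)]
  calc (t*Real.exp (-(n:ℝ)*t)) * (Real.exp (-v^2) * (4*(n:ℝ) + 6*(v*ny) + 18*v^2))
      ≤ 1 * ((4*(n:ℝ)+24)*(1+X)) := by
        apply mul_le_mul h1 hrest (by positivity) (by norm_num)
  _ = (4*(n:ℝ)+24)*(1+X) := by ring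

set_option maxHeartbeats 1000000 in
theorem large_t (n : ℕ) (hn : 1 ≤ n) (x y : EuclideanSpace ℝ (Fin n))
    (hr1' : ‖x - y‖ ≤ 1) {t : ℝ} (ht4 : (1:ℝ)/4 ≤ t) :
    ‖x - y‖ ^ (n-1) *
      (t * |deriv (fun s => heatKerA n s x y) t - deriv (fun s => heatKerW n s (x - y)) t|)
      ≤ ((n:ℝ)/2 + 2 + 3^n*(4*(n:ℝ)+24)) * (1 + ‖x‖) := by
  have ht : 0 < t := by linarith
  rw [derivA x y ht, derivW (x - y) ht]
  set z := x - y with hz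
  set r := ‖z‖ with hrdef
  set ny := ‖y‖ with hny
  set X := ‖x‖ with hX
  set b := Real.exp (-t) with hbdef
  set g := 1 - Real.exp (-2*t) with hgdef
  set e2 := Real.exp (-2*t) with he2def
  set u := x - Real.exp (-t) • y with hu
  set v := ‖u‖ with hv
  have hr0 : 0 ≤ r := norm_nonneg _
  have hny0 : 0 ≤ ny := norm_nonneg _
  have hX0 : 0 ≤ X := norm_nonneg _
  have hv0 : 0 ≤ v := norm_nonneg _
  have hyx : ny ≤ 1 + X := by
    have hyz : y = x - z := by rw [hz]; abel
    rw [hny, hyz]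
    calc ‖x - z‖ ≤ ‖x‖ + ‖z‖ := norm_sub_le x z
    _ ≤ 1 + X := by rw [← hX, ← hrdef]; linarith
  have he2pos : 0 < e2 := Real.exp_pos _
  have hg13 : 1/3 ≤ g := by
    have h1 : Real.exp (-2*t) ≤ Real.exp (-(1/2:ℝ)) := Real.exp_le_exp.mpr (by linarith)
    have h2 := exp_half_le
    rw [hgdef]
    have : e2 ≤ 2/3 := by rw [he2def]; linarith
    linarith
  have hg1 : g ≤ 1 := by rw [hgdef]; linarith
  have hgpos : 0 < g := by linarith
  have hbpos : 0 < b := Real.exp_pos _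
  have hb1 : b ≤ 1 := Real.exp_le_one_iff.mpr (by linarith)
  have he21 : e2 ≤ 1 := Real.exp_le_one_iff.mpr (by linarith)
  set A := heatKerA n t x y with hA
  set W := heatKerW n t z with hW
  have hexpo : -(n:ℝ)/2 ≤ 0 := by
    have : (0:ℝ) ≤ (n:ℝ) := Nat.cast_nonneg n
    linarith
  have hA0 : 0 ≤ A := by
    rw [hA, heatKerA]
    apply mul_nonneg
    apply mul_nonneg
    apply mul_nonneg (Real.exp_pos _).le (Real.rpow_nonneg Real.pi_pos.le _)
    · exact Real.rpow_nonneg (by rw [← hgdef]; linarith) _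
    · exact (Real.exp_pos _).le
  have hW0 : 0 < W := by
    rw [hW, heatKerW]
    have h2pi : (0:ℝ) < 2*Real.pi*t := by positivity
    positivity
  have hWle : W ≤ 1 := by
    rw [hW, heatKerW]
    have h1 : (1:ℝ) ≤ 2*Real.pi*t := by
      have h2 : (2*3)*((1:ℝ)/4) ≤ (2*Real.pi)*t :=
        mul_le_mul (by linarith [Real.pi_gt_three]) ht4 (by norm_num) (by positivity)
      linarith
    have h3 : (2*Real.pi*t) ^ (-(n:ℝ)/2) ≤ 1 := Real.rpow_le_one_of_one_le_of_nonpos h1 hexpo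
    have h4 : Real.exp (-‖z‖^2/(2*t)) ≤ 1 := Real.exp_le_one_iff.mpr (by
      rw [← hrdef, neg_div]
      have : (0:ℝ) ≤ r^2/(2*t) := by positivity
      linarith)
    calc (2*Real.pi*t) ^ (-(n:ℝ)/2) * Real.exp (-‖z‖^2/(2*t)) ≤ 1*1 :=
          mul_le_mul h3 h4 (Real.exp_pos _).le (by norm_num)
    _ = 1 := by norm_num
  have hAle : A ≤ Real.exp (-(n:ℝ)*t) * ((3:ℝ)^n * Real.exp (-v^2)) := by
    rw [hA, heatKerA]
    have hpi : Real.pi ^ (-(n:ℝ)/2) ≤ 1 :=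
      Real.rpow_le_one_of_one_le_of_nonpos (by linarith [Real.pi_gt_three]) hexpo
    have hge : (1 - Real.exp (-2*t)) ^ (-(n:ℝ)/2) ≤ (3:ℝ)^n := by
      have s1 : (1 - Real.exp (-2*t)) ^ (-(n:ℝ)/2) ≤ ((1:ℝ)/3) ^ (-(n:ℝ)/2) :=
        Real.rpow_le_rpow_of_nonpos (by norm_num) (by rw [← hgdef]; exact hg13) hexpo
      have s2 : ((1:ℝ)/3) ^ (-(n:ℝ)/2) = (3:ℝ) ^ ((n:ℝ)/2) := by
        rw [show ((1:ℝ)/3) = (3:ℝ)⁻¹ by norm_num,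
          Real.inv_rpow (by norm_num : (0:ℝ) ≤ 3),
          show -(n:ℝ)/2 = -((n:ℝ)/2) by ring,
          Real.rpow_neg (by norm_num : (0:ℝ) ≤ 3), inv_inv]
      have s3 : (3:ℝ) ^ ((n:ℝ)/2) ≤ (3:ℝ) ^ ((n:ℝ)) := by
        apply Real.rpow_le_rpow_of_exponent_le (by norm_num)
        have : (0:ℝ) ≤ (n:ℝ) := Nat.cast_nonneg n
        linarith
      have s4 : (3:ℝ) ^ ((n:ℝ)) = (3:ℝ)^n := Real.rpow_natCast 3 n
      rw [s2] at s1
      rw [s4] at s3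
      linarith
    have hexpg : Real.exp (-‖u‖^2/(1 - Real.exp (-2*t))) ≤ Real.exp (-v^2) := by
      apply Real.exp_le_exp.mpr
      rw [← hv, ← hgdef]
      rw [neg_div]
      have h5 : v^2 ≤ v^2/g := by
        rw [le_div_iff₀ hgpos]
        nlinarith [sq_nonneg v]
      linarith
    calc Real.exp (-(n:ℝ)*t) * Real.pi ^ (-(n:ℝ)/2) * (1 - Real.exp (-2*t)) ^ (-(n:ℝ)/2) *
          Real.exp (-‖u‖^2/(1 - Real.exp (-2*t)))
        ≤ Real.exp (-(n:ℝ)*t) * 1 * (3:ℝ)^n * Real.exp (-v^2) := by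
          apply mul_le_mul _ hexpg (Real.exp_pos _).le
          · positivity
          apply mul_le_mul _ hge (Real.rpow_nonneg (by rw [← hgdef]; linarith) _)
          · positivity
          exact mul_le_mul_of_nonneg_left hpi (Real.exp_pos _).le
    _ = Real.exp (-(n:ℝ)*t) * ((3:ℝ)^n * Real.exp (-v^2)) := by ring
  set PE : ℝ := -(n:ℝ) - (n:ℝ)*e2/g - 2*b*((inner ℝ u y))/g + 2*e2*‖u‖^2/g^2 with hPEdef
  set QE : ℝ := -(n:ℝ)/(2*t) + r^2/(2*t^2) with hQEdef
  have hPEb : |PE| ≤ 4*(n:ℝ) + 6*(v*ny) + 18*v^2 := by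
    rw [hPEdef, ← hv]
    have huyb : |(inner ℝ u y)| ≤ v*ny := abs_real_inner_le_norm u y
    rw [show ‖u‖^2 = v^2 by rw [hv]]
    exact bd_P_large n hg13 hg1 he2pos.le he21 hbpos.le hb1 huyb hv0 hny0
  have htQb : t*|QE| ≤ (n:ℝ)/2 + 2 := by rw [hQEdef]; exact bd_tQ2 n ht4 hr0 hr1'
  have habs : |A*PE - W*QE| ≤ A*|PE| + W*|QE| := by
    calc |A*PE - W*QE| ≤ |A*PE| + |W*QE| := abs_sub _ _
    _ = A*|PE| + W*|QE| := by
        rw [abs_mul, abs_mul, abs_of_nonneg hA0, abs_of_nonneg hW0.le]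
  have hrpow1 : r^(n-1) ≤ 1 := pow_le_one₀ hr0 hr1'
  have hP1 : t*(A*|PE|) ≤ (3:ℝ)^n*((4*(n:ℝ)+24)*(1+X)) := by
    have s1 : t*(A*|PE|) ≤ t*((Real.exp (-(n:ℝ)*t) * ((3:ℝ)^n * Real.exp (-v^2)))
        *(4*(n:ℝ) + 6*(v*ny) + 18*v^2)) := by
      apply mul_le_mul_of_nonneg_left _ ht.le
      exact mul_le_mul hAle hPEb (abs_nonneg _) (by positivity)
    have s2 : t*((Real.exp (-(n:ℝ)*t) * ((3:ℝ)^n * Real.exp (-v^2)))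
        *(4*(n:ℝ) + 6*(v*ny) + 18*v^2))
        = (3:ℝ)^n*((t*Real.exp (-(n:ℝ)*t)) * (Real.exp (-v^2)*(4*(n:ℝ) + 6*(v*ny) + 18*v^2))) := by
      ring
    rw [s2] at s1
    refine s1.trans ?_
    apply mul_le_mul_of_nonneg_left _ (by positivity)
    exact large_core n hn ht4 hv0 hny0 hyx hX0
  have hP2 : W*(t*|QE|) ≤ (n:ℝ)/2 + 2 := by
    calc W*(t*|QE|) ≤ 1*((n:ℝ)/2 + 2) := mul_le_mul hWle htQb (by positivity) (by norm_num)
    _ = (n:ℝ)/2 + 2 := by ring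
  calc r^(n-1) * (t * |A*PE - W*QE|) ≤ 1 * (t * (A*|PE| + W*|QE|)) := by
        apply mul_le_mul hrpow1 (mul_le_mul_of_nonneg_left habs ht.le) (by positivity) (by norm_num)
  _ = t*(A*|PE|) + W*(t*|QE|) := by ring
  _ ≤ (3:ℝ)^n*((4*(n:ℝ)+24)*(1+X)) + ((n:ℝ)/2 + 2) := add_le_add hP1 hP2
  _ ≤ ((n:ℝ)/2 + 2 + 3^n*(4*(n:ℝ)+24)) * (1 + X) := by
      have hh : (0:ℝ) ≤ ((n:ℝ)/2+2)*X := by positivity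
      nlinarith [hh]

end aux

/-- There exists `C > 0` such that for all `(x,y) ∈ N` with `x ≠ y`,
`sup_{t>0} t |∂_t T_t^𝒜(x,y) - ∂_t W_t(x-y)| ≤ C (1+|x|)/|x-y|^{n-1}`. -/
theorem stmt12 (n : ℕ) (hn : 1 ≤ n) :
    ∃ C : ℝ, 0 < C ∧ ∀ x y : EuclideanSpace ℝ (Fin n), (x, y) ∈ localN n → x ≠ y →
      ∀ t : ℝ, 0 < t →
      t * |deriv (fun s => heatKerA n s x y) t - deriv (fun s => heatKerW n s (x - y)) t|
        ≤ C * (1 + ‖x‖) / ‖x - y‖ ^ ((n : ℝ) - 1) := by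
  refine ⟨Csmall n + ((n:ℝ)/2 + 2 + 3^n*(4*(n:ℝ)+24)), ?_, ?_⟩
  · have h1 : 0 < Csmall n := by
      unfold Csmall Cg
      positivity
    have h2 : (0:ℝ) ≤ (n:ℝ)/2 + 2 + 3^n*(4*(n:ℝ)+24) := by positivity
    linarith
  · intro x y hmem hxy t ht
    simp only [localN, Set.mem_setOf_eq] at hmem
    obtain ⟨hm1, hm2⟩ := hmem
    have hrpos : 0 < ‖x - y‖ := by
      rw [norm_pos_iff]; exact sub_ne_zero.mpr hxy
    have hcast : ‖x - y‖ ^ ((n:ℝ) - 1) = ‖x - y‖ ^ (n-1) := by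
      rw [show ((n:ℝ) - 1) = ((n-1 : ℕ) : ℝ) from by rw [Nat.cast_sub hn]; norm_num,
        Real.rpow_natCast]
    rw [hcast]
    have key : ∀ D B : ℝ, ‖x - y‖^(n-1) * D ≤ B → D ≤ B / ‖x - y‖^(n-1) := by
      intro D B hD
      rw [le_div_iff₀ (by positivity : (0:ℝ) < ‖x - y‖^(n-1)), mul_comm]
      exact hD
    apply key
    have hCs0 : 0 < Csmall n := by unfold Csmall Cg; positivity
    have hCl0 : (0:ℝ) ≤ (n:ℝ)/2 + 2 + 3^n*(4*(n:ℝ)+24) := by positivity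
    have hX0 : (0:ℝ) ≤ ‖x‖ := norm_nonneg _
    rcases le_or_gt t (1/4) with hts | htl
    · have h := small_t n hn x y hm1 hm2 ht hts
      refine h.trans ?_
      apply mul_le_mul_of_nonneg_right _ (by linarith)
      linarith
    · have h := large_t n hn x y hm1 htl.le
      refine h.trans ?_
      apply mul_le_mul_of_nonneg_right _ (by linarith)
      linarith
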